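/- arXiv:1509.02074 — 8 statements merged into one kernel-verified Lean document; each statement's English description precedes it below -/
import Mathlib

section
/- Let Ω be a probability space, n ≥ 1 and K ≥ 1 integers, 𝒳 and 𝒰 nonempty finite alphabets, and let U : Ω → 𝒰, X_1,…,X_n : Ω → 𝒳 and S_1,…,S_n : Ω → (Fin K → Bool) be random variables. Let δ_1,…,δ_K ∈ [0,1). Assume: (i) for each slot i and each user k, P(S_i(k) = false) = δ_k, and for each i the components (S_i(1),…,S_i(K)) are mutually independent; (ii) for each i, S_i is independent of the joint tuple (U, X_1,…,X_i, S_1,…,S_{i−1}). Define Y_{k,i} : Ω → Option 𝒳 by Y_{k,i} = some(X_i) if S_i(k) = true and Y_{k,i} = none otherwise. Then for every nonempty set 𝒥 ⊆ {1,…,K}: H[ (Y_{k,i})_{k∈𝒥, 1≤i≤n} | (U, S_1,…,S_n) ] = (1 − ∏_{k∈𝒥} δ_k) · Σ_{i=1}^n H[ X_i | ( (Y_{k,t})_{k∈𝒥, t≤i−1}, U, S_1,…,S_{i−1} ) ]. -/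
open MeasureTheory ProbabilityTheory

/-- Shannon entropy (in nats) of a finite-valued random variable. -/
noncomputable def entropy {Ω : Type*} [MeasurableSpace Ω] (μ : Measure Ω)
    {α : Type*} [Fintype α] (X : Ω → α) : ℝ :=
  ∑ x : α, Real.negMulLog (μ (X ⁻¹' {x})).toReal

/-- Shannon conditional entropy `H[X | Y] = H[(X,Y)] - H[Y]` of finite-valued
random variables. -/
noncomputable def condEntropy {Ω : Type*} [MeasurableSpace Ω] (μ : Measure Ω)
    {α β : Type*} [Fintype α] [Fintype β] (X : Ω → α) (Y : Ω → β) : ℝ :=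
  entropy μ (fun ω => (X ω, Y ω)) - entropy μ Y

/-!
Write `g m = H[Y^{<m} | U, S^{<m}]` for the outputs (to the users in `𝒥`) and the states of the
first `m` slots, so that the left-hand side is `g n` and `g 0 = 0`. Going from `m` to `m + 1`
adds the output `Y_m` and the state `S_m`; by the chain rule the increment is
`H[Y^{<m} | U, S^{<m}, S_m] - g m + H[Y_m | Y^{<m}, U, S^{<m}, S_m]`. Everything here except
`S_m` is a function of `V_m = (U, X_{≤m}, S_{<m})`, which is independent of `S_m`. Hence the
first difference vanishes, and the last term is the average over the values `s` of `S_m` of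
`H[Y_m | Y^{<m}, U, S^{<m}]` with `S_m = s` plugged in: the output is constant when `s` erases
every user of `𝒥`, which has probability `∏ δ_k` by independence across users, and it
determines `X_m` otherwise.
-/

section Entropy

variable {Ω α β γ : Type*} [MeasurableSpace Ω] {μ : Measure Ω} [Fintype α] [Fintype β]
  [Fintype γ]

lemma entropy_comp_injective (f : Ω → α) {e : α → β} (he : Function.Injective e) :
    entropy μ (fun ω => e (f ω)) = entropy μ f := by
  refine (Fintype.sum_of_injective e he _ _ (fun b hb => ?_) fun a => ?_).symm
  · have hempty : (fun ω => e (f ω)) ⁻¹' {b} = ∅ :=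
      Set.eq_empty_of_forall_notMem fun ω hω => hb ⟨f ω, hω⟩
    simp [hempty]
  · have hfiber : (fun ω => e (f ω)) ⁻¹' {e a} = f ⁻¹' {a} := by
      ext ω; simp [he.eq_iff]
    rw [hfiber]

lemma condEntropy_comp_left_injective (f : Ω → α) (g : Ω → γ) {e : α → β}
    (he : Function.Injective e) :
    condEntropy μ (fun ω => e (f ω)) g = condEntropy μ f g := by
  unfold condEntropy
  rw [← entropy_comp_injective (fun ω => (f ω, g ω)) (he.prodMap Function.injective_id)]
  rfl

lemma condEntropy_comp_right_injective (f : Ω → γ) (g : Ω → α) {e : α → β}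
    (he : Function.Injective e) :
    condEntropy μ f (fun ω => e (g ω)) = condEntropy μ f g := by
  unfold condEntropy
  rw [← entropy_comp_injective (fun ω => (f ω, g ω)) (Function.injective_id.prodMap he),
    entropy_comp_injective g he]
  rfl

lemma condEntropy_const (c : α) (g : Ω → β) : condEntropy μ (fun _ => c) g = 0 := by
  unfold condEntropy
  rw [entropy_comp_injective g (e := fun b => (c, b)) fun _ _ h => (Prod.mk.inj h).2, sub_self]

lemma condEntropy_prod_left (f : Ω → α) (g : Ω → β) (h : Ω → γ) :
    condEntropy μ (fun ω => (f ω, g ω)) h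
      = condEntropy μ f h + condEntropy μ g (fun ω => (f ω, h ω)) := by
  have hassoc : entropy μ (fun ω => ((f ω, g ω), h ω))
      = entropy μ (fun ω => (g ω, (f ω, h ω))) :=
    entropy_comp_injective (fun ω => (g ω, (f ω, h ω))) (e := fun x => ((x.2.1, x.1), x.2.2))
      fun x y hxy => by simp_all [Prod.ext_iff]
  unfold condEntropy
  rw [hassoc]
  ring

end Entropy

section Independence

variable {Ω σ γ β δ : Type*} [MeasurableSpace Ω] {μ : Measure Ω} [IsProbabilityMeasure μ]
  [Fintype σ] [MeasurableSpace σ] [MeasurableSingletonClass σ]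
  [Countable γ] [MeasurableSpace γ] [MeasurableSingletonClass γ] [Fintype β] [Fintype δ]
  {T : Ω → σ} {Z : Ω → γ}

lemma sum_measureReal_preimage_comp_singleton_eq_one (hZ : Measurable Z) (g : γ → β) :
    ∑ b, μ.real ((fun ω => g (Z ω)) ⁻¹' {b}) = 1 := by
  rw [sum_measureReal_preimage_singleton (f := fun ω => g (Z ω)) _
    fun b _ => by exact hZ (Set.to_countable (g ⁻¹' {b})).measurableSet]
  simp

lemma entropy_prod_eq_add_sum_of_indepFun (hZ : Measurable Z) (h : IndepFun T Z μ)
    (G : σ → γ → β) :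
    entropy μ (fun ω => (T ω, G (T ω) (Z ω)))
      = entropy μ T + ∑ s, μ.real (T ⁻¹' {s}) * entropy μ (fun ω => G s (Z ω)) := by
  have hfiber : ∀ s b, (μ ((fun ω => (T ω, G (T ω) (Z ω))) ⁻¹' {(s, b)})).toReal
      = μ.real (T ⁻¹' {s}) * μ.real ((fun ω => G s (Z ω)) ⁻¹' {b}) := by
    intro s b
    have hset : (fun ω => (T ω, G (T ω) (Z ω))) ⁻¹' {(s, b)}
        = T ⁻¹' {s} ∩ Z ⁻¹' (G s ⁻¹' {b}) := by
      ext ω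
      simp only [Set.mem_preimage, Set.mem_singleton_iff, Prod.mk.injEq, Set.mem_inter_iff]
      constructor <;> rintro ⟨rfl, hb⟩ <;> exact ⟨rfl, hb⟩
    rw [hset, h.measure_inter_preimage_eq_mul _ _ (measurableSet_singleton s)
      (Set.to_countable _).measurableSet, ENNReal.toReal_mul]
    rfl
  unfold entropy
  simp only [Fintype.sum_prod_type, hfiber, Real.negMulLog_mul, Finset.sum_add_distrib,
    ← Finset.sum_mul, ← Finset.mul_sum, sum_measureReal_preimage_comp_singleton_eq_one hZ,
    one_mul]
  rfl

lemma condEntropy_prod_indepFun_eq_sum (hZ : Measurable Z) (h : IndepFun T Z μ)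
    (G : σ → γ → β) (c : γ → δ) :
    condEntropy μ (fun ω => G (T ω) (Z ω)) (fun ω => (c (Z ω), T ω))
      = ∑ s, μ.real (T ⁻¹' {s})
          * condEntropy μ (fun ω => G s (Z ω)) (fun ω => c (Z ω)) := by
  have hjoint : entropy μ (fun ω => (G (T ω) (Z ω), (c (Z ω), T ω)))
      = entropy μ (fun ω => (T ω, (G (T ω) (Z ω), c (Z ω)))) :=
    entropy_comp_injective (fun ω => (T ω, (G (T ω) (Z ω), c (Z ω))))
      (e := fun x => (x.2.1, (x.2.2, x.1)))
      fun x y hxy => by simp_all [Prod.ext_iff]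
  have hcond : entropy μ (fun ω => (c (Z ω), T ω)) = entropy μ (fun ω => (T ω, c (Z ω))) :=
    entropy_comp_injective (fun ω => (T ω, c (Z ω))) Prod.swap_injective
  have hmix := entropy_prod_eq_add_sum_of_indepFun hZ h (fun s z => (G s z, c z))
  have hmix' := entropy_prod_eq_add_sum_of_indepFun hZ h (fun _ z => c z)
  unfold condEntropy
  rw [hjoint, hcond, hmix, hmix']
  simp only [mul_sub, Finset.sum_sub_distrib]
  ring

lemma condEntropy_prod_indepFun (hT : Measurable T) (hZ : Measurable Z) (h : IndepFun T Z μ)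
    (a : γ → β) (c : γ → δ) :
    condEntropy μ (fun ω => a (Z ω)) (fun ω => (c (Z ω), T ω))
      = condEntropy μ (fun ω => a (Z ω)) (fun ω => c (Z ω)) := by
  rw [condEntropy_prod_indepFun_eq_sum hZ h (fun _ => a) c, ← Finset.sum_mul,
    show ∑ s, μ.real (T ⁻¹' {s}) = 1 from sum_measureReal_preimage_comp_singleton_eq_one hT id,
    one_mul]

lemma condEntropy_erasure_of_indepFun {α : Type*} [Fintype α] (hT : Measurable T)
    (hZ : Measurable Z) (h : IndepFun T Z μ) (F : σ → α → β) (x : γ → α) (c : γ → δ)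
    (B : Set σ) (e₀ : β) (herase : ∀ s ∈ B, ∀ a, F s a = e₀)
    (hpass : ∀ s ∉ B, Function.Injective (F s)) :
    condEntropy μ (fun ω => F (T ω) (x (Z ω))) (fun ω => (c (Z ω), T ω))
      = (1 - μ.real (T ⁻¹' B)) * condEntropy μ (fun ω => x (Z ω)) (fun ω => c (Z ω)) := by
  classical
  have hterm : ∀ s,
      μ.real (T ⁻¹' {s}) * condEntropy μ (fun ω => F s (x (Z ω))) (fun ω => c (Z ω))
      = (μ.real (T ⁻¹' {s}) - if s ∈ B then μ.real (T ⁻¹' {s}) else 0)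
        * condEntropy μ (fun ω => x (Z ω)) (fun ω => c (Z ω)) := by
    intro s
    by_cases hs : s ∈ B
    · simp only [herase s hs, condEntropy_const, if_pos hs, sub_self, mul_zero, zero_mul]
    · rw [condEntropy_comp_left_injective _ _ (hpass s hs), if_neg hs, sub_zero]
  have hB : ∑ s, (if s ∈ B then μ.real (T ⁻¹' {s}) else 0) = μ.real (T ⁻¹' B) := by
    rw [← Finset.sum_filter, sum_measureReal_preimage_singleton _
      fun s _ => hT (measurableSet_singleton s)]
    congr
    ext; simp
  rw [condEntropy_prod_indepFun_eq_sum hZ h (fun s z => F s (x z)) c,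
    Finset.sum_congr rfl fun s _ => hterm s, ← Finset.sum_mul, Finset.sum_sub_distrib, hB,
    show ∑ s, μ.real (T ⁻¹' {s}) = 1 from
      sum_measureReal_preimage_comp_singleton_eq_one hT id]

end Independence

lemma measureReal_forall_eq_of_iIndepFun {Ω ι β : Type*} [MeasurableSpace Ω] {μ : Measure Ω}
    [MeasurableSpace β] [MeasurableSingletonClass β] {T : Ω → ι → β}
    (h : iIndepFun (fun k ω => T ω k) μ) (J : Finset ι) (b : β) :
    μ.real {ω | ∀ k ∈ J, T ω k = b} = ∏ k ∈ J, μ.real {ω | T ω k = b} := by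
  have hinter : {ω | ∀ k ∈ J, T ω k = b} = ⋂ k ∈ J, (fun ω => T ω k) ⁻¹' {b} := by
    ext; simp
  rw [hinter, measureReal_def, h.measure_inter_preimage_eq_mul J
    fun k _ => measurableSet_singleton b, ENNReal.toReal_prod]
  rfl

lemma eq_sum_of_succ_eq_add {n : ℕ} (g : (m : ℕ) → m ≤ n → ℝ) (d : Fin n → ℝ)
    (hzero : g 0 n.zero_le = 0) (hsucc : ∀ i : Fin n, g (i + 1) i.isLt = g i i.isLt.le + d i) :
    g n le_rfl = ∑ i, d i := by
  suffices h : ∀ m (hm : m ≤ n), g m hm = ∑ i : Fin m, d (Fin.castLE hm i) from h n le_rfl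
  intro m hm
  induction m with
  | zero => simpa using hzero
  | succ m ih =>
    rw [Fin.sum_univ_castSucc]
    exact (hsucc ⟨m, hm⟩).trans (congrArg (· + _) (ih (m.le_succ.trans hm)))

section ErasureChannel

variable {Ω β σ : Type*} {n K : ℕ}

def pastOutputs (Y : Fin K → Fin n → Ω → β) (𝒥 : Finset (Fin K)) (m : ℕ) (hm : m ≤ n)
    (ω : Ω) : {k // k ∈ 𝒥} × Fin m → β :=
  fun q => Y q.1.1 (Fin.castLE hm q.2) ω

def pastStates (S : Fin n → Ω → σ) (m : ℕ) (hm : m ≤ n) (ω : Ω) : Fin m → σ :=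
  fun t => S (Fin.castLE hm t) ω

variable [MeasurableSpace Ω] {μ : Measure Ω}

lemma condEntropy_pastOutputs_succ_eq_snoc {𝒰 : Type*} [Fintype β] [Fintype σ] [Fintype 𝒰]
    (Y : Fin K → Fin n → Ω → β) (S : Fin n → Ω → σ) (U : Ω → 𝒰) (𝒥 : Finset (Fin K))
    (i : Fin n) :
    condEntropy μ (pastOutputs Y 𝒥 (i.val + 1) i.isLt)
        (fun ω => (U ω, pastStates S (i.val + 1) i.isLt ω))
      = condEntropy μ
          (fun ω => (pastOutputs Y 𝒥 i i.isLt.le ω, fun k : {k // k ∈ 𝒥} => Y k.1 i ω))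
          (fun ω => ((U ω, pastStates S i i.isLt.le ω), S i ω)) := by
  have hsnocY : Function.Injective fun p : ({k // k ∈ 𝒥} × Fin i → β) × ({k // k ∈ 𝒥} → β) =>
      fun q : {k // k ∈ 𝒥} × Fin (i.val + 1) =>
        Fin.snoc (α := fun _ => β) (fun t => p.1 (q.1, t)) (p.2 q.1) q.2 := by
    intro p p' h
    have hk : ∀ k, (fun t => p.1 (k, t)) = (fun t => p'.1 (k, t)) ∧ p.2 k = p'.2 k := fun k =>
      Fin.snoc_injective2 (α := fun _ => β) (funext fun t => congrFun h (k, t) :)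
    exact Prod.ext (funext fun q => congrFun (hk q.1).1 q.2) (funext fun k => (hk k).2)
  have hsnocS : Function.Injective fun c : (𝒰 × (Fin i → σ)) × σ =>
      (c.1.1, Fin.snoc (α := fun _ => σ) c.1.2 c.2) := by
    rintro ⟨⟨u, p⟩, s⟩ ⟨⟨u', p'⟩, s'⟩ h
    obtain ⟨rfl, h⟩ := Prod.mk.inj h
    obtain ⟨rfl, rfl⟩ := Fin.snoc_injective2 h
    rfl
  refine Eq.trans ?_ ((condEntropy_comp_left_injective _ _ hsnocY).trans
    (condEntropy_comp_right_injective _ _ hsnocS))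
  congr 1
  · funext ω q
    exact (congrFun (Fin.snoc_init_self fun t => pastOutputs Y 𝒥 (i.val + 1) i.isLt ω (q.1, t))
      q.2).symm
  · funext ω
    exact congrArg _ (Fin.snoc_init_self (pastStates S (i.val + 1) i.isLt ω)).symm

theorem condEntropy_pastOutputs_succ [IsProbabilityMeasure μ] {𝒳 𝒰 : Type*} [Fintype 𝒳]
    [MeasurableSpace 𝒳] [MeasurableSingletonClass 𝒳] [Fintype 𝒰] [MeasurableSpace 𝒰]
    [MeasurableSingletonClass 𝒰] {U : Ω → 𝒰} {X : Fin n → Ω → 𝒳}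
    {S : Fin n → Ω → Fin K → Bool} {Y : Fin K → Fin n → Ω → Option 𝒳}
    (hU : Measurable U) (hX : ∀ i, Measurable (X i)) (hS : ∀ i, Measurable (S i))
    (hY : ∀ k i ω, Y k i ω = if S i ω k = true then some (X i ω) else none)
    (𝒥 : Finset (Fin K)) (i : Fin n)
    (hpast : IndepFun (S i)
      (fun ω => (U ω, fun t : Fin (i.val + 1) => X (Fin.castLE i.isLt t) ω,
        fun t : Fin i.val => S (Fin.castLE i.isLt.le t) ω)) μ) :
    condEntropy μ (pastOutputs Y 𝒥 (i.val + 1) i.isLt)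
        (fun ω => (U ω, pastStates S (i.val + 1) i.isLt ω))
      = condEntropy μ (pastOutputs Y 𝒥 i i.isLt.le)
          (fun ω => (U ω, pastStates S i i.isLt.le ω))
        + (1 - μ.real {ω | ∀ k ∈ 𝒥, S i ω k = false})
          * condEntropy μ (X i)
              (fun ω => (pastOutputs Y 𝒥 i i.isLt.le ω, U ω, pastStates S i i.isLt.le ω)) := by
  set Z := fun ω => (U ω, fun t : Fin (i.val + 1) => X (Fin.castLE i.isLt t) ω,
    fun t : Fin i.val => S (Fin.castLE i.isLt.le t) ω)
  have hZ : Measurable Z :=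
    hU.prodMk ((measurable_pi_lambda _ fun _ => hX _).prodMk
      (measurable_pi_lambda _ fun _ => hS _))
  set channel : (Fin K → Bool) → 𝒳 → {k // k ∈ 𝒥} → Option 𝒳 :=
    fun s x k => if s k.1 = true then some x else none
  have herase :
      ∀ s ∈ {s : Fin K → Bool | ∀ k ∈ 𝒥, s k = false}, ∀ x, channel s x = fun _ => none :=
    fun s hs x => funext fun k => by simp [channel, hs k.1 k.2]
  have hpass :
      ∀ s ∉ {s : Fin K → Bool | ∀ k ∈ 𝒥, s k = false}, Function.Injective (channel s) := by
    intro s hs x x' h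
    obtain ⟨k, hk, hsk⟩ : ∃ k ∈ 𝒥, s k = true := by simpa using hs
    simpa [channel, hsk] using congrFun h ⟨k, hk⟩
  have hpastZ : pastOutputs Y 𝒥 i i.isLt.le
      = fun ω q => channel ((Z ω).2.2 q.2) ((Z ω).2.1 q.2.castSucc) q.1 := by
    funext ω q
    exact hY _ _ _
  have hcurrent : (fun ω (k : {k // k ∈ 𝒥}) => Y k.1 i ω)
      = fun ω => channel (S i ω) ((Z ω).2.1 (Fin.last i)) := by
    funext ω k
    exact hY _ _ _
  rw [condEntropy_pastOutputs_succ_eq_snoc, condEntropy_prod_left]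
  congr 1
  · rw [hpastZ]
    exact condEntropy_prod_indepFun (hS i) hZ hpast
      (fun z (q : {k // k ∈ 𝒥} × Fin i) => channel (z.2.2 q.2) (z.2.1 q.2.castSucc) q.1)
      fun z => (z.1, z.2.2)
  · refine (condEntropy_comp_right_injective _
      (fun ω => ((pastOutputs Y 𝒥 i i.isLt.le ω, U ω, pastStates S i i.isLt.le ω), S i ω))
      (e := fun c => (c.1.1, c.1.2, c.2)) fun c c' h => by simp_all [Prod.ext_iff]).trans ?_
    rw [hcurrent, hpastZ]
    exact condEntropy_erasure_of_indepFun (hS i) hZ hpast channel (fun z => z.2.1 (Fin.last i))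
      (fun z => (fun (q : {k // k ∈ 𝒥} × Fin i) =>
        channel (z.2.2 q.2) (z.2.1 q.2.castSucc) q.1, z.1, z.2.2))
      {s | ∀ k ∈ 𝒥, s k = false} (fun _ => none) herase hpass

end ErasureChannel

theorem erasure_channel_condEntropy_identity_general
    {Ω : Type*} [MeasurableSpace Ω] (μ : Measure Ω) [IsProbabilityMeasure μ]
    (n K : ℕ)
    {𝒳 𝒰 : Type*} [Fintype 𝒳] [MeasurableSpace 𝒳]
    [MeasurableSingletonClass 𝒳] [Fintype 𝒰] [MeasurableSpace 𝒰]
    [MeasurableSingletonClass 𝒰]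
    (U : Ω → 𝒰) (X : Fin n → Ω → 𝒳) (S : Fin n → Ω → (Fin K → Bool))
    (hU : Measurable U) (hX : ∀ i, Measurable (X i)) (hS : ∀ i, Measurable (S i))
    (δ : Fin K → ℝ) (hδ0 : ∀ k, 0 ≤ δ k)
    -- (i) marginal erasure probabilities and independence across users
    (hmarg : ∀ (i : Fin n) (k : Fin K), μ {ω | S i ω k = false} = ENNReal.ofReal (δ k))
    (husers : ∀ i : Fin n, iIndepFun
      (fun k ω => S i ω k) μ)
    -- (ii) the state in slot i is independent of (U, X_1,…,X_i, S_1,…,S_{i-1})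
    (hpast : ∀ i : Fin n, IndepFun (S i)
      (fun ω => (U ω, fun t : Fin (i.val + 1) => X (Fin.castLE i.isLt t) ω,
        fun t : Fin i.val => S (Fin.castLE i.isLt.le t) ω)) μ)
    -- channel outputs
    (Y : Fin K → Fin n → Ω → Option 𝒳)
    (hY : ∀ k i ω, Y k i ω = if S i ω k = true then some (X i ω) else none) :
    ∀ 𝒥 : Finset (Fin K), 𝒥.Nonempty →
      condEntropy μ (fun ω => fun q : {x // x ∈ 𝒥} × Fin n => Y q.1.1 q.2 ω)
          (fun ω => (U ω, fun i : Fin n => S i ω))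
        = (1 - ∏ k ∈ 𝒥, δ k) *
            ∑ i : Fin n,
              condEntropy μ (X i)
                (fun ω =>
                  ((fun q : {x // x ∈ 𝒥} × Fin i.val =>
                      Y q.1.1 (Fin.castLE i.isLt.le q.2) ω),
                   U ω,
                   (fun t : Fin i.val => S (Fin.castLE i.isLt.le t) ω))) := by
  intro 𝒥 _
  have hallErased : ∀ i, μ.real {ω | ∀ k ∈ 𝒥, S i ω k = false} = ∏ k ∈ 𝒥, δ k := fun i => by
    rw [measureReal_forall_eq_of_iIndepFun (husers i)]
    exact Finset.prod_congr rfl fun k _ => by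
      rw [measureReal_def, hmarg, ENNReal.toReal_ofReal (hδ0 k)]
  have hinitial : ∀ h : 0 ≤ n, pastOutputs Y 𝒥 0 h = fun _ q => q.2.elim0 := fun _ =>
    funext fun _ => funext fun q => q.2.elim0
  rw [Finset.mul_sum]
  exact eq_sum_of_succ_eq_add
    (fun m hm => condEntropy μ (pastOutputs Y 𝒥 m hm) (fun ω => (U ω, pastStates S m hm ω)))
    _ (by simp only [hinitial, condEntropy_const]) fun i => by
      rw [condEntropy_pastOutputs_succ hU hX hS hY 𝒥 i (hpast i), hallErased]
      rfl

/-- Per-set conditional-entropy identity from the proof of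
Lemma 1 of the paper: for every nonempty `𝒥 ⊆ {1,…,K}`,
`H[(Y_{k,i})_{k∈𝒥,i≤n} | U, S^n]
  = (1-∏_{k∈𝒥} δ_k) Σ_{i=1}^n H[X_i | (Y_{k,t})_{k∈𝒥,t≤i-1}, U, S^{i-1}]`. -/
theorem erasure_channel_condEntropy_identity
    {Ω : Type*} [MeasurableSpace Ω] (μ : Measure Ω) [IsProbabilityMeasure μ]
    (n K : ℕ) (hn : 1 ≤ n) (hK : 1 ≤ K)
    {𝒳 𝒰 : Type*} [Fintype 𝒳] [Nonempty 𝒳] [MeasurableSpace 𝒳]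
    [MeasurableSingletonClass 𝒳] [Fintype 𝒰] [Nonempty 𝒰] [MeasurableSpace 𝒰]
    [MeasurableSingletonClass 𝒰]
    (U : Ω → 𝒰) (X : Fin n → Ω → 𝒳) (S : Fin n → Ω → (Fin K → Bool))
    (hU : Measurable U) (hX : ∀ i, Measurable (X i)) (hS : ∀ i, Measurable (S i))
    (δ : Fin K → ℝ) (hδ0 : ∀ k, 0 ≤ δ k) (hδ1 : ∀ k, δ k < 1)
    -- (i) marginal erasure probabilities and independence across users
    (hmarg : ∀ (i : Fin n) (k : Fin K), μ {ω | S i ω k = false} = ENNReal.ofReal (δ k))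
    (husers : ∀ i : Fin n, iIndepFun
      (fun k ω => S i ω k) μ)
    -- (ii) the state in slot i is independent of (U, X_1,…,X_i, S_1,…,S_{i-1})
    (hpast : ∀ i : Fin n, IndepFun (S i)
      (fun ω => (U ω, fun t : Fin (i.val + 1) => X (Fin.castLE i.isLt t) ω,
        fun t : Fin i.val => S (Fin.castLE i.isLt.le t) ω)) μ)
    -- channel outputs
    (Y : Fin K → Fin n → Ω → Option 𝒳)
    (hY : ∀ k i ω, Y k i ω = if S i ω k = true then some (X i ω) else none) :
    ∀ 𝒥 : Finset (Fin K), 𝒥.Nonempty →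
      condEntropy μ (fun ω => fun q : {x // x ∈ 𝒥} × Fin n => Y q.1.1 q.2 ω)
          (fun ω => (U ω, fun i : Fin n => S i ω))
        = (1 - ∏ k ∈ 𝒥, δ k) *
            ∑ i : Fin n,
              condEntropy μ (X i)
                (fun ω =>
                  ((fun q : {x // x ∈ 𝒥} × Fin i.val =>
                      Y q.1.1 (Fin.castLE i.isLt.le q.2) ω),
                   U ω,
                   (fun t : Fin i.val => S (Fin.castLE i.isLt.le t) ω))) :=
  erasure_channel_condEntropy_identity_general μ n K U X S hU hX hS δ hδ0 hmarg husers hpast Y hY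
end

section
/- Let K ≥ 1 and N ≥ 1 be integers and p ∈ [0,1]. For each file index i ∈ {1,…,N} and each subset J ⊆ {1,…,K}, let W_{i|J} be a finite-valued random variable on a common probability space, and assume the whole family (W_{i|J})_{i∈[N], J⊆[K]} is mutually independent. Set W_i = (W_{i|J})_{J⊆[K]} and define the cache content of user k by Z_k = (W_{i|J})_{i∈[N], J ∋ k}. Assume that for every i and every J ⊆ {1,…,K}, H[W_{i|J}] = p^{|J|}(1−p)^{K−|J|} · H[W_i]. Then for every set 𝒦 ⊆ {1,…,K} and every i ∈ {1,…,N}: H[ W_i | (Z_k)_{k∈𝒦} ] = (1−p)^{|𝒦|} · H[W_i]. -/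
/-!
Conditioning on the caches of `𝒦` removes exactly the sub-files `W_{i|J}` with `J ∩ 𝒦 ≠ ∅`.
Both `(W_i, Z_𝒦)` and `Z_𝒦` are injective encodings of collections of independent sub-files,
whose entropies therefore add up, so
`H[W_i | Z_𝒦] = ∑_{J ⊆ 𝒦ᶜ} H[W_{i|J}] = H[W_i] ∑_{J ⊆ 𝒦ᶜ} p^|J| (1-p)^(K-|J|)`,
which is `(1-p)^|𝒦| H[W_i]` by the binomial theorem.
-/

open MeasureTheory ProbabilityTheory

open Finset

lemma Real.negMulLog_prod {ι : Type*} [DecidableEq ι] (s : Finset ι) (c : ι → ℝ) :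
    Real.negMulLog (∏ j ∈ s, c j) =
      ∑ i ∈ s, (∏ j ∈ s.erase i, c j) * Real.negMulLog (c i) := by
  induction s using Finset.induction_on with
  | empty => simp
  | @insert a s ha ih =>
    rw [prod_insert ha, Real.negMulLog_mul, ih, sum_insert ha, erase_insert ha, mul_sum]
    congr 1
    refine sum_congr rfl fun i hi => ?_
    rw [erase_insert_of_ne (ne_of_mem_of_not_mem hi ha).symm,
      prod_insert fun h => ha (mem_of_mem_erase h)]
    ring

lemma Real.sum_negMulLog_prod_eq_sum {ι : Type*} [Fintype ι] [DecidableEq ι] {α : ι → Type*}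
    [∀ i, Fintype (α i)] (q : ∀ i, α i → ℝ) (hq : ∀ i, ∑ a, q i a = 1) :
    ∑ x : ∀ i, α i, Real.negMulLog (∏ i, q i (x i)) =
      ∑ i, ∑ a, Real.negMulLog (q i a) := by
  have expand (x : ∀ i, α i) : Real.negMulLog (∏ i, q i (x i)) =
      ∑ i, ∏ j, if j = i then Real.negMulLog (q j (x j)) else q j (x j) := by
    rw [Real.negMulLog_prod]
    refine sum_congr rfl fun i _ => ?_
    rw [← mul_prod_erase univ _ (mem_univ i), if_pos rfl, mul_comm]
    congr 1
    exact prod_congr rfl fun j hj => (if_neg (ne_of_mem_erase hj)).symm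
  simp_rw [expand]
  rw [sum_comm]
  refine sum_congr rfl fun i _ => ?_
  rw [← Fintype.prod_sum (fun j a => if j = i then Real.negMulLog (q j a) else q j a),
    prod_eq_single i (fun j _ hj => by simp [hj, hq j]) (by simp)]
  simp

lemma sum_measureReal_preimage_singleton_eq_one {Ω α : Type*} [MeasurableSpace Ω]
    (μ : Measure Ω) [IsProbabilityMeasure μ] [Fintype α] [MeasurableSpace α]
    [MeasurableSingletonClass α] {X : Ω → α} (hX : Measurable X) :
    ∑ a, μ.real (X ⁻¹' {a}) = 1 := by
  rw [sum_measureReal_preimage_singleton _ fun a _ => hX (measurableSet_singleton a)]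
  simp

section Entropy

variable {Ω : Type*} [MeasurableSpace Ω] (μ : Measure Ω)

lemma entropy_comp_of_injective {α β : Type*} [Fintype α] [Fintype β] (X : Ω → α)
    {f : α → β} (hf : f.Injective) :
    entropy μ (fun ω => f (X ω)) = entropy μ X := by
  refine (Fintype.sum_of_injective f hf _ _ (fun y hy => ?_) fun x => ?_).symm
  · have : (fun ω => f (X ω)) ⁻¹' {y} = ∅ :=
      Set.eq_empty_of_forall_notMem fun ω h => hy ⟨X ω, h⟩
    simp [this]
  · have : (fun ω => f (X ω)) ⁻¹' {f x} = X ⁻¹' {x} := by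
      ext ω; simp [hf.eq_iff]
    rw [this]

lemma entropy_pi_of_iIndepFun [IsProbabilityMeasure μ] {ι : Type*} [Fintype ι] [DecidableEq ι]
    {α : ι → Type*} [∀ i, Fintype (α i)] [∀ i, MeasurableSpace (α i)]
    [∀ i, MeasurableSingletonClass (α i)] {X : ∀ i, Ω → α i} (hX : ∀ i, Measurable (X i))
    (hindep : iIndepFun X μ) :
    entropy μ (fun ω i => X i ω) = ∑ i, entropy μ (X i) := by
  have hprod (x : ∀ i, α i) :
      μ ((fun ω i => X i ω) ⁻¹' {x}) = ∏ i, μ (X i ⁻¹' {x i}) := by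
    have : (fun ω i => X i ω) ⁻¹' {x} = ⋂ i ∈ univ, X i ⁻¹' {x i} := by
      ext ω; simp [funext_iff]
    rw [this, hindep.measure_inter_preimage_eq_mul univ fun i _ => measurableSet_singleton _]
  unfold entropy
  simp_rw [hprod, ENNReal.toReal_prod]
  exact Real.sum_negMulLog_prod_eq_sum _ fun i =>
    sum_measureReal_preimage_singleton_eq_one μ (hX i)

lemma entropy_comp_subfamily_of_iIndepFun [IsProbabilityMeasure μ] {ι ι' β : Type*}
    [Fintype ι'] [DecidableEq ι'] [Fintype β] {α : ι → Type*} [∀ i, Fintype (α i)]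
    [∀ i, MeasurableSpace (α i)] [∀ i, MeasurableSingletonClass (α i)] {X : ∀ i, Ω → α i}
    (hX : ∀ i, Measurable (X i)) (hindep : iIndepFun X μ) {e : ι' → ι} (he : e.Injective) {f : (∀ j, α (e j)) → β}
    (hf : f.Injective) :
    entropy μ (fun ω => f fun j => X (e j) ω) = ∑ j, entropy μ (X (e j)) :=
  (entropy_comp_of_injective μ _ hf).trans
    (entropy_pi_of_iIndepFun μ (fun j => hX (e j)) (hindep.precomp he))

end Entropy

lemma sum_powerset_compl_pow_mul_pow {R α : Type*} [CommRing R] [Fintype α] [DecidableEq α]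
    (p : R) (s : Finset α) :
    ∑ J ∈ sᶜ.powerset, p ^ #J * (1 - p) ^ (Fintype.card α - #J) = (1 - p) ^ #s := by
  have hcard : #s + #sᶜ = Fintype.card α := card_add_card_compl s
  calc ∑ J ∈ sᶜ.powerset, p ^ #J * (1 - p) ^ (Fintype.card α - #J)
      = ∑ J ∈ sᶜ.powerset, (1 - p) ^ #s * (p ^ #J * (1 - p) ^ (#sᶜ - #J)) := by
        refine sum_congr rfl fun J hJ => ?_
        have hJle := card_le_card (mem_powerset.1 hJ)
        rw [show Fintype.card α - #J = #s + (#sᶜ - #J) by omega, pow_add]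
        ring
    _ = (1 - p) ^ #s := by
        rw [← mul_sum, sum_pow_mul_eq_add_pow, add_sub_cancel, one_pow, mul_one]

section Caching

variable {N K : ℕ} {V : Fin N → Finset (Fin K) → Type*} (𝒦 : Finset (Fin K)) (i : Fin N)

def IsCachedBy (iJ : Fin N × Finset (Fin K)) : Prop := ∃ k ∈ iJ.2, k ∈ 𝒦

instance : DecidablePred (IsCachedBy (N := N) 𝒦) :=
  fun iJ => inferInstanceAs (Decidable (∃ k ∈ iJ.2, k ∈ 𝒦))

/-- The caches `(Z_k)_{k ∈ 𝒦}`, read off the sub-files cached by some user of `𝒦`. -/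
def cacheContents (t : ∀ iJ : Subtype (IsCachedBy 𝒦), V iJ.1.1 iJ.1.2) (k : 𝒦)
    (iJ : {x : Fin N × Finset (Fin K) // (k : Fin K) ∈ x.2}) : V iJ.1.1 iJ.1.2 :=
  t ⟨iJ.1, k.1, iJ.2, k.2⟩

theorem cacheContents_injective : (cacheContents (V := V) 𝒦).Injective := fun t t' h => by
  funext ⟨iJ, k, hkJ, hk⟩
  exact congrFun (congrFun h ⟨k, hk⟩) ⟨iJ, hkJ⟩

/-- Indexes the sub-files of `W_i` stored by no user of `𝒦`, together with all sub-files
stored by some user of `𝒦`. -/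
def fileAndCacheIndex :
    𝒦ᶜ.powerset ⊕ Subtype (IsCachedBy (N := N) 𝒦) → Fin N × Finset (Fin K) :=
  Sum.elim (fun J => (i, J.1)) Subtype.val

theorem fileAndCacheIndex_injective : (fileAndCacheIndex 𝒦 i).Injective := by
  refine Function.Injective.sumElim (fun J J' h => Subtype.ext (congrArg Prod.snd h))
    Subtype.val_injective fun J ⟨iJ, k, hkJ, hk⟩ h => ?_
  subst h
  exact mem_compl.1 (mem_powerset.1 J.2 hkJ) hk

theorem isCachedBy_of_notMem_powerset_compl {J : Finset (Fin K)} (hJ : J ∉ 𝒦ᶜ.powerset) :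
    IsCachedBy 𝒦 (i, J) := by
  simpa [IsCachedBy, not_subset] using hJ

/-- `(W_i, (Z_k)_{k ∈ 𝒦})` as a function of the sub-files indexed by `fileAndCacheIndex`. -/
def fileAndCacheContents
    (t : ∀ s, V (fileAndCacheIndex 𝒦 i s).1 (fileAndCacheIndex 𝒦 i s).2) :
    (∀ J, V i J) × (∀ (k : 𝒦) (iJ : {x : Fin N × Finset (Fin K) // (k : Fin K) ∈ x.2}),
      V iJ.1.1 iJ.1.2) :=
  (fun J => if hJ : J ∈ 𝒦ᶜ.powerset then t (.inl ⟨J, hJ⟩)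
    else t (.inr ⟨(i, J), isCachedBy_of_notMem_powerset_compl 𝒦 i hJ⟩),
    cacheContents 𝒦 fun iJ => t (.inr iJ))

theorem fileAndCacheContents_injective : (fileAndCacheContents (V := V) 𝒦 i).Injective := by
  intro t t' h
  funext s
  rcases s with ⟨J, hJ⟩ | ⟨iJ, k, hkJ, hk⟩
  · exact (dif_pos hJ).symm.trans ((congrFun (congrArg Prod.fst h) J).trans (dif_pos hJ))
  · exact congrFun (congrFun (congrArg Prod.snd h) ⟨k, hk⟩) ⟨iJ, hkJ⟩

theorem fileAndCacheContents_restrict (x : ∀ iJ : Fin N × Finset (Fin K), V iJ.1 iJ.2) :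
    fileAndCacheContents 𝒦 i (fun s => x (fileAndCacheIndex 𝒦 i s)) =
      (fun J => x (i, J), cacheContents 𝒦 fun iJ => x iJ.1) := by
  simp [fileAndCacheContents, fileAndCacheIndex]

variable {Ω : Type*} [MeasurableSpace Ω] (μ : Measure Ω) [IsProbabilityMeasure μ]
  [∀ i J, Fintype (V i J)] [∀ i J, MeasurableSpace (V i J)]
  [∀ i J, MeasurableSingletonClass (V i J)] {W : ∀ i J, Ω → V i J}

theorem entropy_cacheContents
    (hW : ∀ i J, Measurable (W i J))
    (hindep : iIndepFun (fun iJ : Fin N × Finset (Fin K) => W iJ.1 iJ.2) μ) :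
    entropy μ (fun ω => cacheContents 𝒦 fun iJ => W iJ.1.1 iJ.1.2 ω) =
      ∑ iJ : Subtype (IsCachedBy 𝒦), entropy μ (W iJ.1.1 iJ.1.2) :=
  entropy_comp_subfamily_of_iIndepFun μ (fun iJ => hW iJ.1 iJ.2) hindep Subtype.val_injective
    (cacheContents_injective 𝒦)

theorem entropy_file_cacheContents
    (hW : ∀ i J, Measurable (W i J))
    (hindep : iIndepFun (fun iJ : Fin N × Finset (Fin K) => W iJ.1 iJ.2) μ) :
    entropy μ (fun ω => (fun J => W i J ω, cacheContents 𝒦 fun iJ => W iJ.1.1 iJ.1.2 ω)) =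
      ∑ J : 𝒦ᶜ.powerset, entropy μ (W i J) +
        ∑ iJ : Subtype (IsCachedBy 𝒦), entropy μ (W iJ.1.1 iJ.1.2) :=
  calc _ = entropy μ (fun ω => fileAndCacheContents 𝒦 i
          fun s => W (fileAndCacheIndex 𝒦 i s).1 (fileAndCacheIndex 𝒦 i s).2 ω) :=
        congrArg (entropy μ) (funext fun ω =>
          (fileAndCacheContents_restrict 𝒦 i fun iJ => W iJ.1 iJ.2 ω).symm)
    _ = _ := (entropy_comp_subfamily_of_iIndepFun μ (fun iJ => hW iJ.1 iJ.2) hindep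
        (fileAndCacheIndex_injective 𝒦 i) (fileAndCacheContents_injective 𝒦 i)).trans
          (Fintype.sum_sum_type _)

theorem condEntropy_file_cacheContents
    (hW : ∀ i J, Measurable (W i J))
    (hindep : iIndepFun (fun iJ : Fin N × Finset (Fin K) => W iJ.1 iJ.2) μ) :
    condEntropy μ (fun ω J => W i J ω)
        (fun ω => cacheContents 𝒦 fun iJ => W iJ.1.1 iJ.1.2 ω) =
      ∑ J ∈ 𝒦ᶜ.powerset, entropy μ (W i J) := by
  rw [condEntropy, entropy_file_cacheContents 𝒦 i μ hW hindep,
    entropy_cacheContents 𝒦 μ hW hindep, add_sub_cancel_right]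
  exact sum_coe_sort _ fun J => entropy μ (W i J)

end Caching

theorem condEntropy_file_given_caches_general {Ω : Type*} [MeasurableSpace Ω] (μ : Measure Ω)
    [IsProbabilityMeasure μ] (K N : ℕ)
    (p : ℝ)
    (V : Fin N → Finset (Fin K) → Type*)
    [∀ i J, Fintype (V i J)] [∀ i J, MeasurableSpace (V i J)]
    [∀ i J, MeasurableSingletonClass (V i J)]
    (W : ∀ i J, Ω → V i J) (hWmeas : ∀ i J, Measurable (W i J))
    (hindep : iIndepFun
      (fun (iJ : Fin N × Finset (Fin K)) => W iJ.1 iJ.2) μ)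
    (hsize : ∀ i J, entropy μ (W i J)
      = p ^ J.card * (1 - p) ^ (K - J.card) * entropy μ (fun ω => fun J' => W i J' ω)) :
    ∀ (𝒦 : Finset (Fin K)) (i : Fin N),
      condEntropy μ (fun ω => fun J => W i J ω)
        (fun ω => fun (k : {x : Fin K // x ∈ 𝒦}) =>
          fun (iJ : {x : Fin N × Finset (Fin K) // (k : Fin K) ∈ x.2}) =>
            W iJ.1.1 iJ.1.2 ω)
      = (1 - p) ^ 𝒦.card * entropy μ (fun ω => fun J => W i J ω) := by
  intro 𝒦 i
  have hcoef := sum_powerset_compl_pow_mul_pow p 𝒦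
  rw [Fintype.card_fin] at hcoef
  refine (condEntropy_file_cacheContents 𝒦 i μ hWmeas hindep).trans ?_
  simp_rw [hsize i, ← sum_mul, hcoef]

/-- **Lemma 2 of the paper.** Under decentralized cache placement,
each file `W_i` is the tuple of mutually independent sub-files `W_{i|J}`, the
sub-file indexed by `J` carrying a fraction `p^|J|(1-p)^(K-|J|)` of the entropy
of `W_i`, and user `k`'s cache is `Z_k = (W_{i|J})_{i, J ∋ k}`.  Then
`H[W_i | (Z_k)_{k∈𝒦}] = (1-p)^|𝒦| H[W_i]`. -/
theorem condEntropy_file_given_caches {Ω : Type*} [MeasurableSpace Ω] (μ : Measure Ω)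
    [IsProbabilityMeasure μ] (K N : ℕ) (hK : 1 ≤ K) (hN : 1 ≤ N)
    (p : ℝ) (hp0 : 0 ≤ p) (hp1 : p ≤ 1)
    (V : Fin N → Finset (Fin K) → Type*)
    [∀ i J, Fintype (V i J)] [∀ i J, MeasurableSpace (V i J)]
    [∀ i J, MeasurableSingletonClass (V i J)]
    (W : ∀ i J, Ω → V i J) (hWmeas : ∀ i J, Measurable (W i J))
    (hindep : iIndepFun
      (fun (iJ : Fin N × Finset (Fin K)) => W iJ.1 iJ.2) μ)
    (hsize : ∀ i J, entropy μ (W i J)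
      = p ^ J.card * (1 - p) ^ (K - J.card) * entropy μ (fun ω => fun J' => W i J' ω)) :
    ∀ (𝒦 : Finset (Fin K)) (i : Fin N),
      condEntropy μ (fun ω => fun J => W i J ω)
        (fun ω => fun (k : {x : Fin K // x ∈ 𝒦}) =>
          fun (iJ : {x : Fin N × Finset (Fin K) // (k : Fin K) ∈ x.2}) =>
            W iJ.1.1 iJ.1.2 ω)
      = (1 - p) ^ 𝒦.card * entropy μ (fun ω => fun J => W i J ω) :=
  condEntropy_file_given_caches_general μ K N p V W hWmeas hindep hsize
end

section
/- Let K ≥ 1 be an integer and δ ∈ [0,1) a real number. Then (1 − δ^K) · Σ_{k=1}^{K} 1/(1 − δ^k) = K + Σ_{j=2}^{K} δ^{K−j+1}(1−δ)^{j−1} · Σ_{k=1}^{K−j+1} C(K−k, j−1)/(1 − δ^k), where C(·,·) denotes the binomial coefficient. -/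
/-! Since `(1 - δ^K) / (1 - δ^k) = 1 + (δ^k - δ^K) / (1 - δ^k)`, the left side is
`K + Σ_k (δ^k - δ^K) / (1 - δ^k)`. On the right, exchanging the sums over `j` and `k` leaves for
each `k` the inner sum `Σ_j δ^(K-j+1) (1-δ)^(j-1) C(K-k, j-1)`, which is `δ^k` times the binomial
expansion of `((1 - δ) + δ)^(K-k)` without its `j = 1` term, i.e. `δ^k (1 - δ^(K-k)) = δ^k - δ^K`. -/

open Finset

theorem add_pow_eq_pow_add_sum_Icc {R : Type*} [CommSemiring R] (x y : R) (n : ℕ) :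
    (x + y) ^ n = y ^ n + ∑ i ∈ Icc 1 n, x ^ i * y ^ (n - i) * n.choose i := by
  rw [add_pow, range_eq_Ico, sum_eq_sum_Ico_succ_bot (by omega : 0 < n + 1), zero_add,
    Ico_add_one_right_eq_Icc]
  simp

theorem sum_Icc_two_pow_mul_one_sub_pow_mul_choose {R : Type*} [CommRing R] (δ : R) {k K : ℕ}
    (hk : 1 ≤ k) (hkK : k ≤ K) :
    ∑ j ∈ Icc 2 (K - k + 1), δ ^ (K - j + 1) * (1 - δ) ^ (j - 1) * ((K - k).choose (j - 1) : R)
      = δ ^ k - δ ^ K := by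
  set n := K - k
  have hK : K = k + n := by omega
  rw [show Icc 2 (n + 1) = (Icc 1 n).map (addRightEmbedding 1) from
    (map_add_right_Icc 1 n 1).symm, sum_map]
  calc ∑ i ∈ Icc 1 n, δ ^ (K - (i + 1) + 1) * (1 - δ) ^ (i + 1 - 1) * (n.choose (i + 1 - 1) : R)
      = δ ^ k * ∑ i ∈ Icc 1 n, (1 - δ) ^ i * δ ^ (n - i) * n.choose i := by
        rw [mul_sum]
        refine sum_congr rfl fun i hi => ?_
        rw [show K - (i + 1) + 1 = k + (n - i) by grind, pow_add, Nat.add_sub_cancel]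
        ring
    _ = δ ^ k - δ ^ K := by
        rw [← add_sub_cancel_left (δ ^ n) (∑ i ∈ _, _), ← add_pow_eq_pow_add_sum_Icc, sub_add_cancel,
          one_pow, hK, pow_add]
        ring

theorem sum_comm_Icc_triangle {M : Type*} [AddCommMonoid M] (K : ℕ) (f : ℕ → ℕ → M) :
    ∑ j ∈ Icc 2 K, ∑ k ∈ Icc 1 (K - j + 1), f j k = ∑ k ∈ Icc 1 K, ∑ j ∈ Icc 2 (K - k + 1), f j k :=
  sum_comm' fun j k => by simp only [mem_Icc]; omega

theorem order_one_rate_identity_general (K : ℕ) (δ : ℝ) (hδ0 : 0 ≤ δ) (hδ1 : δ < 1) :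
    (1 - δ ^ K) * ∑ k ∈ Finset.Icc 1 K, 1 / (1 - δ ^ k)
      = K + ∑ j ∈ Finset.Icc 2 K, δ ^ (K - j + 1) * (1 - δ) ^ (j - 1) *
          ∑ k ∈ Finset.Icc 1 (K - j + 1), (Nat.choose (K - k) (j - 1) : ℝ) / (1 - δ ^ k) := by
  have hne : ∀ k ∈ Icc 1 K, 1 - δ ^ k ≠ 0 := fun k hk =>
    sub_ne_zero.2 (pow_lt_one₀ hδ0 hδ1 (by grind)).ne'
  calc (1 - δ ^ K) * ∑ k ∈ Icc 1 K, 1 / (1 - δ ^ k)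
      = ∑ k ∈ Icc 1 K, (1 + (δ ^ k - δ ^ K) / (1 - δ ^ k)) := by
        rw [mul_sum]
        refine sum_congr rfl fun k hk => ?_
        field_simp [hne k hk]
        ring
    _ = K + ∑ k ∈ Icc 1 K, (δ ^ k - δ ^ K) / (1 - δ ^ k) := by simp [sum_add_distrib]
    _ = _ := by
        simp_rw [mul_sum, sum_comm_Icc_triangle K]
        congr 1
        refine sum_congr rfl fun k hk => ?_
        simp_rw [← mul_div_assoc, ← sum_div]
        rw [sum_Icc_two_pow_mul_one_sub_pow_mul_choose δ (mem_Icc.1 hk).1 (mem_Icc.1 hk).2]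

/-- For an integer `K ≥ 1` and `δ ∈ [0,1)`,
`(1 - δ^K) Σ_{k=1}^K 1/(1-δ^k)
  = K + Σ_{j=2}^K δ^(K-j+1)(1-δ)^(j-1) Σ_{k=1}^{K-j+1} C(K-k, j-1)/(1-δ^k)`. -/
theorem order_one_rate_identity (K : ℕ) (hK : 1 ≤ K) (δ : ℝ) (hδ0 : 0 ≤ δ) (hδ1 : δ < 1) :
    (1 - δ ^ K) * ∑ k ∈ Finset.Icc 1 K, 1 / (1 - δ ^ k)
      = K + ∑ j ∈ Finset.Icc 2 K, δ ^ (K - j + 1) * (1 - δ) ^ (j - 1) *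
          ∑ k ∈ Finset.Icc 1 (K - j + 1), (Nat.choose (K - k) (j - 1) : ℝ) / (1 - δ ^ k) :=
  order_one_rate_identity_general K δ hδ0 hδ1
end

section
/- Let K ≥ 1 be an integer and p, δ ∈ [0,1) real numbers. Then Σ_{k=1}^{K} (1−p)^k/(1−δ^k) = K(1−p)^K/(1−δ^K) + Σ_{j=2}^{K} [ p^{j−1}(1−p)^{K−j+1} + (1−p)^K δ^{K−j+1}(1−δ)^{j−1}/(1−δ^K) ] · Σ_{k=1}^{K−j+1} C(K−k, j−1)/(1−δ^k), where C(·,·) denotes the binomial coefficient. -/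
lemma binom_tail (m : ℕ) (x y : ℝ) :
    ∑ i ∈ Finset.Icc 1 m, (Nat.choose m i : ℝ) * x ^ i * y ^ (m - i)
      = (x + y) ^ m - y ^ m := by
  have h := add_pow x y m
  rw [Finset.sum_range_succ'] at h
  have : Finset.Icc 1 m = Finset.Ico 1 (m + 1) := (Finset.Ico_add_one_right_eq_Icc 1 m).symm
  rw [this, Finset.sum_Ico_eq_sum_range]
  simp only [Nat.add_sub_cancel, Nat.add_comm 1, pow_zero, one_mul, Nat.sub_zero,
    Nat.choose_zero_right, Nat.cast_one, mul_one] at *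
  rw [eq_sub_iff_add_eq, h]
  congr 1
  exact Finset.sum_congr rfl fun i _ => by ring

/-- For an integer `K ≥ 1` and reals `p, δ ∈ [0,1)`,
`Σ_{k=1}^K (1-p)^k/(1-δ^k)
  = K(1-p)^K/(1-δ^K)
    + Σ_{j=2}^K [p^(j-1)(1-p)^(K-j+1) + (1-p)^K δ^(K-j+1)(1-δ)^(j-1)/(1-δ^K)]
        · Σ_{k=1}^{K-j+1} C(K-k, j-1)/(1-δ^k)`. -/
theorem cache_rate_identity (K : ℕ) (hK : 1 ≤ K) (p δ : ℝ)
    (hp0 : 0 ≤ p) (hp1 : p < 1) (hδ0 : 0 ≤ δ) (hδ1 : δ < 1) :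
    ∑ k ∈ Finset.Icc 1 K, (1 - p) ^ k / (1 - δ ^ k)
      = K * (1 - p) ^ K / (1 - δ ^ K)
        + ∑ j ∈ Finset.Icc 2 K,
            (p ^ (j - 1) * (1 - p) ^ (K - j + 1)
              + (1 - p) ^ K * δ ^ (K - j + 1) * (1 - δ) ^ (j - 1) / (1 - δ ^ K)) *
            ∑ k ∈ Finset.Icc 1 (K - j + 1), (Nat.choose (K - k) (j - 1) : ℝ) / (1 - δ ^ k) := by
  have hδk : ∀ k : ℕ, 1 ≤ k → (1 : ℝ) - δ ^ k ≠ 0 := by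
    intro k hk
    have : δ ^ k < 1 := pow_lt_one₀ hδ0 hδ1 (by omega)
    linarith
  have hδK := hδk K hK
  set A : ℕ → ℝ := fun j =>
    p ^ (j - 1) * (1 - p) ^ (K - j + 1)
      + (1 - p) ^ K * δ ^ (K - j + 1) * (1 - δ) ^ (j - 1) / (1 - δ ^ K) with hA
  have distrib : ∀ j ∈ Finset.Icc 2 K,
      A j * ∑ k ∈ Finset.Icc 1 (K - j + 1), (Nat.choose (K - k) (j - 1) : ℝ) / (1 - δ ^ k)
        = ∑ k ∈ Finset.Icc 1 (K - j + 1),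
            A j * ((Nat.choose (K - k) (j - 1) : ℝ) / (1 - δ ^ k)) :=
    fun j _ => Finset.mul_sum _ _ _
  rw [Finset.sum_congr rfl distrib]
  rw [Finset.sum_comm' (t' := Finset.Icc 1 (K - 1)) (s' := fun k => Finset.Icc 2 (K - k + 1))
    (by intro j k; simp only [Finset.mem_Icc]; omega)]
  have key : ∀ k ∈ Finset.Icc 1 (K - 1),
      (∑ j ∈ Finset.Icc 2 (K - k + 1),
          A j * ((Nat.choose (K - k) (j - 1) : ℝ) / (1 - δ ^ k)))
        = (1 - p) ^ k / (1 - δ ^ k) - (1 - p) ^ K / (1 - δ ^ K) := by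
    intro k hk
    rw [Finset.mem_Icc] at hk
    set m := K - k with hm
    have hm1 : 1 ≤ m := by omega
    have hkm : k + m = K := by omega
    have hδkk := hδk k hk.1
    have hmap : Finset.Icc 2 (K - k + 1)
        = (Finset.Icc 1 m).map (addRightEmbedding 1) := by
      rw [Finset.map_add_right_Icc]
    rw [hmap, Finset.sum_map]
    simp only [addRightEmbedding_apply]
    have hterm : ∀ i ∈ Finset.Icc 1 m,
        A (i + 1) * ((Nat.choose (K - k) (i + 1 - 1) : ℝ) / (1 - δ ^ k))
          = ((Nat.choose m i : ℝ) * p ^ i * (1 - p) ^ (m - i))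
              * ((1 - p) ^ k / (1 - δ ^ k))
            + ((Nat.choose m i : ℝ) * (1 - δ) ^ i * δ ^ (m - i))
              * ((1 - p) ^ K * δ ^ k / ((1 - δ ^ K) * (1 - δ ^ k))) := by
      intro i hi
      rw [Finset.mem_Icc] at hi
      simp only [hA, Nat.add_sub_cancel, ← hm]
      rw [show K - (i + 1) + 1 = (m - i) + k from by omega, pow_add, pow_add]
      field_simp
    rw [Finset.sum_congr rfl hterm, Finset.sum_add_distrib, ← Finset.sum_mul, ← Finset.sum_mul,
      binom_tail, binom_tail,
      show p + (1 - p) = (1 : ℝ) from by ring, show (1 - δ) + δ = (1 : ℝ) from by ring, one_pow]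
    have hδK' : (1 : ℝ) - δ ^ k * δ ^ m ≠ 0 := by rwa [← pow_add, hkm]
    rw [show K = k + m from hkm.symm, pow_add, pow_add]
    field_simp [hδkk, hδK']
    ring
  rw [Finset.sum_congr rfl key, Finset.sum_sub_distrib, Finset.sum_const, Nat.card_Icc]
  have hsplit : Finset.Icc 1 K = Finset.Icc 1 ((K - 1) + 1) := by congr 1; omega
  rw [hsplit, Finset.sum_Icc_succ_top (by omega), show K - 1 + 1 = K from by omega]
  rw [nsmul_eq_mul]
  push_cast [Nat.cast_sub hK]
  ring
end

section
/- Fix integers K ≥ 1 and 1 ≤ i ≤ K, a real δ ∈ [0,1) and a real N > 0. Define β_j = 1 − δ^{K−j+1} for i ≤ j ≤ K and α_{l→j} = δ^{K−j+1}(1−δ)^{j−l} for l < j, and define the GGT subphase lengths recursively by t_i = N/β_i and t_j = (1/β_j) Σ_{l=i}^{j−1} C(j−1, l−1) t_l α_{l→j} for i < j ≤ K. Then for every j with i ≤ j ≤ K: Σ_{l=i}^{j} C(j−1, l−1) t_l = N · C(j−1, j−i) / β_j, where C(·,·) denotes the binomial coefficient. -/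
/-!
Write `T_x f j = ∑_{l=i}^{j} C(j-1,l-1) x^(j-l) f l`. These shifted binomial transforms compose
additively, `T_x ∘ T_y = T_(x+y)`, and `T_0` is the identity, so the grouped sums `U = T_1 t` are
inverted by `T_(-1)`. Since `δ^(K-j+1) (-δ)^(j-m) = (-1)^(j-m) δ^(K-m+1)`, the recursion for `t`,
rewritten in terms of `U`, says that `T_(-1)` of `m ↦ β_m U_m` equals `N` at `i` and `0` above `i`.
Applying `T_1` gives `β_j U_j = N C(j-1,i-1)`.
-/

open Finset

section BinomialTransform

variable {R : Type*} [CommRing R]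

theorem sum_Icc_choose_mul_pow_mul_pow (x y : R) {l j : ℕ} (hlj : l ≤ j) :
    ∑ m ∈ Icc l j, ((j - l).choose (m - l) : R) * x ^ (j - m) * y ^ (m - l) = (x + y) ^ (j - l) := by
  obtain ⟨n, rfl⟩ := Nat.exists_eq_add_of_le hlj
  rw [← Ico_add_one_right_eq_Icc, sum_Ico_eq_sum_range, add_comm x, add_pow]
  simp only [Nat.add_sub_cancel_left, add_assoc, Nat.add_sub_add_left]
  exact sum_congr rfl fun k _ => by ring

def binomialTransform (i : ℕ) (x : R) (f : ℕ → R) (j : ℕ) : R :=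
  ∑ l ∈ Icc i j, ((j - 1).choose (l - 1) : R) * x ^ (j - l) * f l

theorem binomialTransform_one (i : ℕ) (f : ℕ → R) (j : ℕ) :
    binomialTransform i 1 f j = ∑ l ∈ Icc i j, ((j - 1).choose (l - 1) : R) * f l := by
  simp only [binomialTransform, one_pow, mul_one]

theorem binomialTransform_congr {i j : ℕ} (x : R) {f g : ℕ → R}
    (hfg : ∀ l, i ≤ l → l ≤ j → f l = g l) :
    binomialTransform i x f j = binomialTransform i x g j :=
  sum_congr rfl fun l hl => by rw [hfg l (mem_Icc.1 hl).1 (mem_Icc.1 hl).2]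

theorem binomialTransform_eq_sum_add {i j : ℕ} (hj : 1 ≤ j) (hij : i ≤ j) (x : R) (f : ℕ → R) :
    binomialTransform i x f j
      = ∑ l ∈ Icc i (j - 1), ((j - 1).choose (l - 1) : R) * x ^ (j - l) * f l + f j := by
  obtain ⟨k, rfl⟩ := Nat.exists_eq_add_of_le' hj
  rw [binomialTransform, sum_Icc_succ_top hij]
  simp

theorem binomialTransform_zero {i j : ℕ} (hij : i ≤ j) (f : ℕ → R) :
    binomialTransform i 0 f j = f j := by
  rw [binomialTransform, sum_eq_single_of_mem j (mem_Icc.2 ⟨hij, le_rfl⟩)]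
  · simp
  · intro l hl hlj
    rw [zero_pow (by grind), mul_zero, zero_mul]

theorem binomialTransform_single {i j : ℕ} (hij : i ≤ j) (x c : R) :
    binomialTransform i x (Pi.single i c) j = ((j - 1).choose (i - 1) : R) * x ^ (j - i) * c := by
  simp [binomialTransform, Pi.single_apply, hij]

theorem binomialTransform_binomialTransform {i : ℕ} (hi : 1 ≤ i) (x y : R) (f : ℕ → R) (j : ℕ) :
    binomialTransform i x (binomialTransform i y f) j = binomialTransform i (x + y) f j := by
  have hchoose : ∀ l m, 1 ≤ l → l ≤ m →
      (j - 1).choose (m - 1) * (m - 1).choose (l - 1)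
        = (j - 1).choose (l - 1) * (j - l).choose (m - l) := by
    intro l m hl hlm
    rw [Nat.choose_mul (by omega), show j - 1 - (l - 1) = j - l by omega,
      show m - 1 - (l - 1) = m - l by omega]
  simp only [binomialTransform, mul_sum]
  rw [sum_comm' (t' := Icc i j) (s' := fun l => Icc l j) (by intro m l; simp only [mem_Icc]; omega)]
  refine sum_congr rfl fun l hl => ?_
  rw [mem_Icc] at hl
  rw [← sum_Icc_choose_mul_pow_mul_pow x y hl.2, mul_sum, sum_mul]
  refine sum_congr rfl fun m hm => ?_
  have := congrArg (Nat.cast : ℕ → R) (hchoose l m (hi.trans hl.1) (mem_Icc.1 hm).1)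
  push_cast at this
  linear_combination (x ^ (j - m) * y ^ (m - l) * f l) * this

theorem binomialTransform_one_binomialTransform_neg_one {i j : ℕ} (hi : 1 ≤ i) (hij : i ≤ j)
    (f : ℕ → R) : binomialTransform i 1 (binomialTransform i (-1) f) j = f j := by
  rw [binomialTransform_binomialTransform hi, add_neg_cancel, binomialTransform_zero hij]

theorem binomialTransform_one_sub_pow_mul (x δ : R) (U : ℕ → R) {i j K : ℕ} (hjK : j ≤ K) :
    binomialTransform i x (fun m => (1 - δ ^ (K - m + 1)) * U m) j
      = binomialTransform i x U j - δ ^ (K - j + 1) * binomialTransform i (x * δ) U j := by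
  simp only [binomialTransform, mul_sum, ← sum_sub_distrib]
  refine sum_congr rfl fun m hm => ?_
  rw [show K - m + 1 = (K - j + 1) + (j - m) by grind]
  ring

end BinomialTransform

theorem ggt_recursion_eq_single {K i : ℕ} (hi : 1 ≤ i) {δ N : ℝ} {β : ℕ → ℝ}
    (hβ : ∀ j, i ≤ j → j ≤ K → β j = 1 - δ ^ (K - j + 1))
    (hβ0 : ∀ j, i ≤ j → j ≤ K → β j ≠ 0) {α : ℕ → ℕ → ℝ}
    (hα : ∀ l j, l < j → α l j = δ ^ (K - j + 1) * (1 - δ) ^ (j - l))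
    {t : ℕ → ℝ} (hti : t i = N / β i)
    (htj : ∀ j, i < j → j ≤ K →
      t j = (1 / β j) * ∑ l ∈ Icc i (j - 1), ((j - 1).choose (l - 1) : ℝ) * t l * α l j)
    {j : ℕ} (hij : i ≤ j) (hjK : j ≤ K) :
    t j - δ ^ (K - j + 1) * binomialTransform i (1 - δ) t j = (Pi.single i N : ℕ → ℝ) j := by
  rw [binomialTransform_eq_sum_add (hi.trans hij) hij]
  rcases hij.eq_or_lt with rfl | hij
  · rw [Icc_eq_empty (by omega), sum_empty, Pi.single_eq_same, hti]
    field_simp [hβ0 i le_rfl hjK]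
    linear_combination (-N) * hβ i le_rfl hjK
  · have hsum : ∑ l ∈ Icc i (j - 1), ((j - 1).choose (l - 1) : ℝ) * t l * α l j
        = δ ^ (K - j + 1) * ∑ l ∈ Icc i (j - 1), ((j - 1).choose (l - 1) : ℝ) * (1 - δ) ^ (j - l) * t l := by
      rw [mul_sum]
      exact sum_congr rfl fun l hl => by rw [hα l j (by grind)]; ring
    have hβj := hβ0 j hij.le hjK
    rw [hβ j hij.le hjK] at hβj
    rw [Pi.single_eq_of_ne hij.ne', htj j hij hjK, hsum, hβ j hij.le hjK]
    field_simp
    ring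

theorem ggt_grouped_closed_form_general (K i : ℕ) (hi : 1 ≤ i)
    (δ N : ℝ) (hδ0 : 0 ≤ δ) (hδ1 : δ < 1)
    (β : ℕ → ℝ) (hβ : ∀ j, i ≤ j → j ≤ K → β j = 1 - δ ^ (K - j + 1))
    (α : ℕ → ℕ → ℝ) (hα : ∀ l j, l < j → α l j = δ ^ (K - j + 1) * (1 - δ) ^ (j - l))
    (t : ℕ → ℝ) (hti : t i = N / β i)
    (htj : ∀ j, i < j → j ≤ K →
      t j = (1 / β j) * ∑ l ∈ Finset.Icc i (j - 1), (Nat.choose (j - 1) (l - 1) : ℝ) * t l * α l j) :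
    ∀ j, i ≤ j → j ≤ K →
      ∑ l ∈ Finset.Icc i j, (Nat.choose (j - 1) (l - 1) : ℝ) * t l
        = N * (Nat.choose (j - 1) (j - i) : ℝ) / β j := by
  have hβ0 : ∀ j, i ≤ j → j ≤ K → β j ≠ 0 := fun j hij hjK => by
    rw [hβ j hij hjK, sub_ne_zero]
    exact (pow_lt_one₀ hδ0 hδ1 (Nat.succ_ne_zero _)).ne'
  have hinv : ∀ m, i ≤ m → m ≤ K →
      binomialTransform i (-1) (fun m => β m * binomialTransform i 1 t m) m
        = (Pi.single i N : ℕ → ℝ) m := fun m him hmK => by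
    rw [binomialTransform_congr _ fun l hil hlm => by rw [hβ l hil (hlm.trans hmK)],
      binomialTransform_one_sub_pow_mul _ _ _ hmK, binomialTransform_binomialTransform hi,
      binomialTransform_binomialTransform hi, neg_add_cancel, binomialTransform_zero him,
      show -1 * δ + 1 = 1 - δ by ring]
    exact ggt_recursion_eq_single hi hβ hβ0 hα hti htj him hmK
  intro j hij hjK
  have hβU : β j * binomialTransform i 1 t j = N * ((j - 1).choose (i - 1) : ℝ) := by
    rw [← binomialTransform_one_binomialTransform_neg_one hi hij (fun m => β m * _),
      binomialTransform_congr 1 fun m him hmj => hinv m him (hmj.trans hjK),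
      binomialTransform_single hij, one_pow, mul_one, mul_comm]
  rw [Nat.choose_symm_of_eq_add (by omega : j - 1 = (j - i) + (i - 1)), ← hβU,
    ← binomialTransform_one, eq_div_iff (hβ0 j hij hjK), mul_comm]

/-- Closed form `U_j^i = N C(j-1, j-i)/β_j` for the grouped GGT
subphase lengths: with `β_j = 1 - δ^(K-j+1)`, `α_{l→j} = δ^(K-j+1)(1-δ)^(j-l)`,
`t_i = N/β_i` and `t_j = (1/β_j) Σ_{l=i}^{j-1} C(j-1,l-1) t_l α_{l→j}` for
`i < j ≤ K`, one has `Σ_{l=i}^j C(j-1,l-1) t_l = N C(j-1, j-i)/β_j` for all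
`i ≤ j ≤ K`. -/
theorem ggt_grouped_closed_form (K i : ℕ) (hi : 1 ≤ i) (hiK : i ≤ K)
    (δ N : ℝ) (hδ0 : 0 ≤ δ) (hδ1 : δ < 1) (hN : 0 < N)
    (β : ℕ → ℝ) (hβ : ∀ j, i ≤ j → j ≤ K → β j = 1 - δ ^ (K - j + 1))
    (α : ℕ → ℕ → ℝ) (hα : ∀ l j, l < j → α l j = δ ^ (K - j + 1) * (1 - δ) ^ (j - l))
    (t : ℕ → ℝ) (hti : t i = N / β i)
    (htj : ∀ j, i < j → j ≤ K →
      t j = (1 / β j) * ∑ l ∈ Finset.Icc i (j - 1), (Nat.choose (j - 1) (l - 1) : ℝ) * t l * α l j) :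
    ∀ j, i ≤ j → j ≤ K →
      ∑ l ∈ Finset.Icc i j, (Nat.choose (j - 1) (l - 1) : ℝ) * t l
        = N * (Nat.choose (j - 1) (j - i) : ℝ) / β j :=
  ggt_grouped_closed_form_general K i hi δ N hδ0 hδ1 β hβ α hα t hti htj
end

section
/- Fix integers K ≥ 1 and 1 ≤ i ≤ K, a real δ ∈ [0,1) and a real N > 0. Define β_j = 1 − δ^{K−j+1} for i ≤ j ≤ K and α_{l→j} = δ^{K−j+1}(1−δ)^{j−l} for l < j, and define the GGT subphase lengths recursively by t_i = N/β_i and t_j = (1/β_j) Σ_{l=i}^{j−1} C(j−1, l−1) t_l α_{l→j} for i < j ≤ K. Then the total number of transmissions satisfies Σ_{j=i}^{K} C(K, j) · t_j = N · Σ_{k=1}^{K−i+1} C(K−k, i−1)/(1 − δ^k). Consequently the order-i sum rate achieved by the algorithm, C(K,i)·N / Σ_{j=i}^K C(K,j) t_j, equals C(K,i) / Σ_{k=1}^{K−i+1} C(K−k, i−1)/(1−δ^k). -/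
/-!
The subphase lengths have the closed form
`t (i + m) = N * C(i - 1 + m, i - 1) * ∑_{r ≥ 0} x_r ^ (K - i - m + 1) * (1 - x_r) ^ m`
with `x_r = δ ^ r`.
In this series form the GGT recursion is, term by term in `r`, the binomial theorem: the sum over
`l` equals the summand at `r + 1` minus `δ ^ (K - j + 1)` times the summand at `r`, so the series
telescopes to `β j` times itself. In the total `∑ C(K, j) * t j` the identity
`∑_j C(K, j) C(j - 1, i - 1) x ^ (K - j) (1 - x) ^ (j - i) = ∑_k C(K - 1 - k, i - 1) x ^ k`
(Pascal's rule, induction on `K - i`) turns the double sum into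
`N * ∑_k C(K - k, i - 1) * ∑_r δ ^ (r * k)`, a combination of geometric series.
-/

open Finset

lemma Finset.sum_Icc_eq_sum_range {M : Type*} [AddCommMonoid M] (f : ℕ → M) (p q : ℕ) :
    ∑ l ∈ Icc p q, f l = ∑ s ∈ range (q + 1 - p), f (p + s) := by
  rw [← Finset.Ico_add_one_right_eq_Icc, Finset.sum_Ico_eq_sum_range]

lemma Nat.add_choose_add_mul_add_choose (a m s : ℕ) :
    (a + m).choose (a + s) * (a + s).choose a = (a + m).choose a * m.choose s := by
  simpa using Nat.choose_mul (n := a + m) (k := a + s) (s := a) (by omega)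

lemma tsum_succ_sub_mul {f : ℕ → ℝ} (hf : Summable f) (hf0 : f 0 = 0) (a : ℝ) :
    ∑' r : ℕ, (f (r + 1) - a * f r) = (1 - a) * ∑' r : ℕ, f r := by
  rw [Summable.tsum_sub ((summable_nat_add_iff 1).2 hf) (hf.mul_left a), tsum_mul_left,
    hf.tsum_eq_zero_add, hf0]
  ring

lemma sum_range_choose_mul_pow_eq_sub (δ x : ℝ) (c m : ℕ) :
    ∑ s ∈ range m,
        (m.choose s * (1 - δ) ^ (m - s) * δ ^ c : ℝ) * (x ^ (c + m - s) * (1 - x) ^ s)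
      = (δ * x) ^ c * (1 - δ * x) ^ m - δ ^ c * (x ^ c * (1 - x) ^ m) := by
  have hbinom : (δ * x) ^ c * (1 - δ * x) ^ m = ∑ s ∈ range (m + 1),
      (m.choose s * (1 - δ) ^ (m - s) * δ ^ c : ℝ) * (x ^ (c + m - s) * (1 - x) ^ s) := by
    rw [show 1 - δ * x = (1 - x) + (1 - δ) * x by ring, add_pow, mul_sum]
    refine sum_congr rfl fun s hs => ?_
    rw [show c + m - s = c + (m - s) by have := mem_range.1 hs; omega, mul_pow (1 - δ), mul_pow δ]
    ring
  rw [hbinom, sum_range_succ, Nat.choose_self, Nat.sub_self, Nat.add_sub_cancel]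
  ring

lemma sum_range_add_choose_mul_pow_mul_pow (a n : ℕ) (x y : ℝ) :
    ∑ s ∈ range (n + 1), ((a + n).choose (a + s) * (a + s).choose a : ℝ) * x ^ (n - s) * y ^ s
      = (a + n).choose a * (x + y) ^ n := by
  rw [add_comm x, add_pow, mul_sum]
  refine sum_congr rfl fun s _ => ?_
  rw [← Nat.cast_mul, Nat.add_choose_add_mul_add_choose, Nat.cast_mul]
  ring

lemma sum_range_choose_mul_pow_mul_one_sub_pow (a b : ℕ) (x : ℝ) :
    ∑ s ∈ range (b + 1), ((a + b + 1).choose (a + s + 1) * (a + s).choose a : ℝ)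
        * x ^ (b - s) * (1 - x) ^ s
      = ∑ s ∈ range (b + 1), ((a + b - s).choose a : ℝ) * x ^ s := by
  induction b with
  | zero => simp
  | succ b ih =>
    have hpascal : ∀ s, ((a + (b + 1) + 1).choose (a + s + 1) : ℝ)
        = (a + (b + 1)).choose (a + s) + (a + b + 1).choose (a + s + 1) := fun s => by
      rw [Nat.choose_succ_succ', Nat.cast_add]; rfl
    have hlower : ∑ s ∈ range (b + 2), ((a + b + 1).choose (a + s + 1) * (a + s).choose a : ℝ)
        * x ^ (b + 1 - s) * (1 - x) ^ s
        = x * ∑ s ∈ range (b + 1), ((a + b + 1).choose (a + s + 1) * (a + s).choose a : ℝ)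
          * x ^ (b - s) * (1 - x) ^ s := by
      rw [sum_range_succ, Nat.choose_eq_zero_of_lt (by omega), mul_sum]
      simp only [Nat.cast_zero, zero_mul, add_zero]
      refine sum_congr rfl fun s hs => ?_
      rw [show b + 1 - s = b - s + 1 by have := mem_range.1 hs; omega]
      ring
    calc _ = ∑ s ∈ range (b + 2), (((a + (b + 1)).choose (a + s) * (a + s).choose a : ℝ)
            * x ^ (b + 1 - s) * (1 - x) ^ s
          + ((a + b + 1).choose (a + s + 1) * (a + s).choose a : ℝ)
            * x ^ (b + 1 - s) * (1 - x) ^ s) :=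
          sum_congr rfl fun s _ => by rw [hpascal]; ring
      _ = (a + b + 1).choose a
          + x * ∑ s ∈ range (b + 1), ((a + b - s).choose a : ℝ) * x ^ s := by
        rw [sum_add_distrib, sum_range_add_choose_mul_pow_mul_pow, hlower, ih]
        simp [add_assoc]
      _ = _ := by
        rw [sum_range_succ' _ (b + 1), mul_sum, add_comm]
        congr 1
        · refine sum_congr rfl fun s _ => ?_
          rw [show a + (b + 1) - (s + 1) = a + b - s by omega]
          ring
        · simp [add_assoc]

noncomputable def ggtSeries (δ : ℝ) (c m : ℕ) : ℝ :=
  ∑' r : ℕ, (δ ^ r) ^ c * (1 - δ ^ r) ^ m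

section ggtSeries

variable {δ : ℝ}

lemma summable_pow_pow_mul_one_sub_pow (hδ0 : 0 ≤ δ) (hδ1 : δ < 1) {c : ℕ} (hc : c ≠ 0)
    (m : ℕ) :
    Summable fun r : ℕ => (δ ^ r) ^ c * (1 - δ ^ r) ^ m := by
  refine (summable_geometric_of_lt_one (pow_nonneg hδ0 c)
    (pow_lt_one₀ hδ0 hδ1 hc)).of_nonneg_of_le (fun r => ?_) (fun r => ?_)
  all_goals have h : 0 ≤ 1 - δ ^ r := sub_nonneg.2 (pow_le_one₀ hδ0 hδ1.le)
  · positivity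
  · rw [← pow_right_comm]
    exact mul_le_of_le_one_right (by positivity)
      (pow_le_one₀ h (by linarith [pow_nonneg hδ0 r]))

lemma ggtSeries_zero_right (hδ0 : 0 ≤ δ) (hδ1 : δ < 1) {c : ℕ} (hc : c ≠ 0) :
    ggtSeries δ c 0 = (1 - δ ^ c)⁻¹ := by
  rw [← tsum_geometric_of_lt_one (pow_nonneg hδ0 c) (pow_lt_one₀ hδ0 hδ1 hc)]
  exact tsum_congr fun r => by rw [pow_zero, mul_one, pow_right_comm]

lemma sum_mul_ggtSeries (hδ0 : 0 ≤ δ) (hδ1 : δ < 1) {ι : Type*} (s : Finset ι)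
    (w : ι → ℝ) (c m : ι → ℕ) (hc : ∀ k ∈ s, c k ≠ 0) :
    ∑ k ∈ s, w k * ggtSeries δ (c k) (m k)
      = ∑' r : ℕ, ∑ k ∈ s, w k * ((δ ^ r) ^ c k * (1 - δ ^ r) ^ m k) := by
  rw [Summable.tsum_finsetSum fun k hk =>
    (summable_pow_pow_mul_one_sub_pow hδ0 hδ1 (hc k hk) (m k)).mul_left (w k)]
  simp only [ggtSeries, tsum_mul_left]

lemma one_sub_pow_mul_ggtSeries (hδ0 : 0 ≤ δ) (hδ1 : δ < 1) {c m : ℕ} (hc : c ≠ 0)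
    (hm : m ≠ 0) :
    (1 - δ ^ c) * ggtSeries δ c m
      = ∑ s ∈ range m,
          (m.choose s * (1 - δ) ^ (m - s) * δ ^ c : ℝ) * ggtSeries δ (c + m - s) s := by
  rw [sum_mul_ggtSeries hδ0 hδ1 _ _ _ _ fun s hs => by have := mem_range.1 hs; omega]
  simp only [sum_range_choose_mul_pow_eq_sub, ← pow_succ']
  exact (tsum_succ_sub_mul (summable_pow_pow_mul_one_sub_pow hδ0 hδ1 hc m)
    (by simp [zero_pow hm]) _).symm

/-- Indices are shifted: `u m` stands for `t (i + m)`, with `a = i - 1` and `b = K - i`. -/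
lemma eq_ggtSeries_of_recursion {N : ℝ} (hδ0 : 0 ≤ δ) (hδ1 : δ < 1) (a b : ℕ)
    (u : ℕ → ℝ)
    (h0 : u 0 = N / (1 - δ ^ (b + 1)))
    (hsucc : ∀ m, m ≠ 0 → m ≤ b → u m = 1 / (1 - δ ^ (b + 1 - m)) *
      ∑ s ∈ range m,
        ((a + m).choose (a + s) : ℝ) * u s * (δ ^ (b + 1 - m) * (1 - δ) ^ (m - s)))
    (m : ℕ) (hmb : m ≤ b) :
    u m = N * (a + m).choose a * ggtSeries δ (b + 1 - m) m := by
  induction m using Nat.strong_induction_on with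
  | _ m ih =>
    rcases Nat.eq_zero_or_pos m with rfl | hm
    · rw [h0, ggtSeries_zero_right hδ0 hδ1 (by omega)]
      simp [div_eq_mul_inv]
    have hc : (1 : ℝ) - δ ^ (b + 1 - m) ≠ 0 :=
      (sub_pos.2 (pow_lt_one₀ hδ0 hδ1 (by omega))).ne'
    have hsum : ∑ s ∈ range m, ((a + m).choose (a + s) : ℝ) * u s
          * (δ ^ (b + 1 - m) * (1 - δ) ^ (m - s))
        = N * (a + m).choose a * ((1 - δ ^ (b + 1 - m)) * ggtSeries δ (b + 1 - m) m) := by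
      rw [one_sub_pow_mul_ggtSeries hδ0 hδ1 (by omega) hm.ne', mul_sum]
      refine sum_congr rfl fun s hs => ?_
      have hs := mem_range.1 hs
      have hchoose : ((a + m).choose (a + s) * (a + s).choose a : ℝ)
          = (a + m).choose a * m.choose s := by
        exact_mod_cast Nat.add_choose_add_mul_add_choose a m s
      rw [ih s hs (by omega), show b + 1 - m + m - s = b + 1 - s by omega]
      linear_combination
        (N * ggtSeries δ (b + 1 - s) s * δ ^ (b + 1 - m) * (1 - δ) ^ (m - s)) * hchoose
    rw [hsucc m hm.ne' hmb, hsum]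
    field_simp

lemma sum_choose_mul_ggtSeries (hδ0 : 0 ≤ δ) (hδ1 : δ < 1) (a b : ℕ) :
    ∑ s ∈ range (b + 1), ((a + b + 1).choose (a + s + 1) * (a + s).choose a : ℝ)
        * ggtSeries δ (b + 1 - s) s
      = ∑ s ∈ range (b + 1), ((a + b - s).choose a : ℝ) / (1 - δ ^ (s + 1)) := by
  simp_rw [div_eq_mul_inv, ← ggtSeries_zero_right hδ0 hδ1 (Nat.add_one_ne_zero _)]
  rw [sum_mul_ggtSeries hδ0 hδ1 _ _ _ _ fun s hs => by have := mem_range.1 hs; omega,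
    sum_mul_ggtSeries hδ0 hδ1 _ _ _ _ fun s _ => by omega]
  refine tsum_congr fun r => ?_
  calc _ = δ ^ r * ∑ s ∈ range (b + 1),
        ((a + b + 1).choose (a + s + 1) * (a + s).choose a : ℝ)
          * (δ ^ r) ^ (b - s) * (1 - δ ^ r) ^ s := by
        rw [mul_sum]
        refine sum_congr rfl fun s hs => ?_
        rw [show b + 1 - s = b - s + 1 by have := mem_range.1 hs; omega, pow_succ]
        ring
    _ = _ := by
        rw [sum_range_choose_mul_pow_mul_one_sub_pow, mul_sum]
        refine sum_congr rfl fun s _ => ?_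
        ring

lemma sum_Icc_choose_mul_eq_of_eq_ggtSeries (hδ0 : 0 ≤ δ) (hδ1 : δ < 1) {N : ℝ} (a b : ℕ)
    (t : ℕ → ℝ)
    (ht : ∀ m ≤ b, t (a + 1 + m) = N * (a + m).choose a * ggtSeries δ (b + 1 - m) m) :
    ∑ j ∈ Icc (a + 1) (a + b + 1), ((a + b + 1).choose j : ℝ) * t j
      = N * ∑ k ∈ Icc 1 (b + 1), ((a + b + 1 - k).choose a : ℝ) / (1 - δ ^ k) := by
  rw [sum_Icc_eq_sum_range, sum_Icc_eq_sum_range, show a + b + 1 + 1 - (a + 1) = b + 1 by omega,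
    Nat.add_sub_cancel]
  calc _ = N * ∑ s ∈ range (b + 1), ((a + b + 1).choose (a + s + 1) * (a + s).choose a : ℝ)
        * ggtSeries δ (b + 1 - s) s := by
        rw [mul_sum]
        refine sum_congr rfl fun s hs => ?_
        rw [ht s (by have := mem_range.1 hs; omega), show a + 1 + s = a + s + 1 by omega]
        ring
    _ = _ := by
        rw [sum_choose_mul_ggtSeries hδ0 hδ1]
        refine congrArg _ (sum_congr rfl fun s _ => ?_)
        rw [show a + b + 1 - (1 + s) = a + b - s by omega, add_comm 1 s]

end ggtSeries

/-- Achievability part of Lemma 3: the GGT algorithm started at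
phase `i` with `N` packets per `i`-subset uses
`Σ_{j=i}^K C(K,j) t_j = N Σ_{k=1}^{K-i+1} C(K-k,i-1)/(1-δ^k)` transmissions, so
the achieved order-`i` sum rate `C(K,i) N / Σ_{j=i}^K C(K,j) t_j` equals
`C(K,i) / Σ_{k=1}^{K-i+1} C(K-k,i-1)/(1-δ^k)`. -/
theorem ggt_total_length_and_rate (K i : ℕ) (hi : 1 ≤ i) (hiK : i ≤ K)
    (δ N : ℝ) (hδ0 : 0 ≤ δ) (hδ1 : δ < 1) (hN : 0 < N)
    (β : ℕ → ℝ) (hβ : ∀ j, i ≤ j → j ≤ K → β j = 1 - δ ^ (K - j + 1))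
    (α : ℕ → ℕ → ℝ) (hα : ∀ l j, l < j → α l j = δ ^ (K - j + 1) * (1 - δ) ^ (j - l))
    (t : ℕ → ℝ) (hti : t i = N / β i)
    (htj : ∀ j, i < j → j ≤ K →
      t j = (1 / β j) * ∑ l ∈ Finset.Icc i (j - 1), (Nat.choose (j - 1) (l - 1) : ℝ) * t l * α l j) :
    (∑ j ∈ Finset.Icc i K, (Nat.choose K j : ℝ) * t j
        = N * ∑ k ∈ Finset.Icc 1 (K - i + 1), (Nat.choose (K - k) (i - 1) : ℝ) / (1 - δ ^ k))
    ∧ (Nat.choose K i : ℝ) * N / (∑ j ∈ Finset.Icc i K, (Nat.choose K j : ℝ) * t j)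
        = (Nat.choose K i : ℝ)
          / (∑ k ∈ Finset.Icc 1 (K - i + 1), (Nat.choose (K - k) (i - 1) : ℝ) / (1 - δ ^ k)) := by
  obtain ⟨a, rfl⟩ : ∃ a, i = a + 1 := ⟨i - 1, by omega⟩
  obtain ⟨b, rfl⟩ : ∃ b, K = a + b + 1 := ⟨K - (a + 1), by omega⟩
  have hlen : ∀ m ≤ b, t (a + 1 + m) = N * (a + m).choose a * ggtSeries δ (b + 1 - m) m := by
    refine eq_ggtSeries_of_recursion hδ0 hδ1 a b (fun m => t (a + 1 + m)) ?_ fun m hm hmb => ?_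
    · rw [add_zero, hti, hβ _ le_rfl (by omega), show a + b + 1 - (a + 1) + 1 = b + 1 by omega]
    · rw [htj _ (by omega) (by omega), hβ _ (by omega) (by omega), sum_Icc_eq_sum_range,
        show a + b + 1 - (a + 1 + m) + 1 = b + 1 - m by omega,
        show a + 1 + m - 1 + 1 - (a + 1) = m by omega]
      refine congrArg _ (sum_congr rfl fun s hs => ?_)
      have hs := mem_range.1 hs
      rw [hα _ _ (by omega), show a + 1 + m - 1 = a + m by omega,
        show a + 1 + s - 1 = a + s by omega,
        show a + b + 1 - (a + 1 + m) + 1 = b + 1 - m by omega,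
        show a + 1 + m - (a + 1 + s) = m - s by omega]
  rw [show a + b + 1 - (a + 1) + 1 = b + 1 by omega, Nat.add_sub_cancel]
  have htotal := sum_Icc_choose_mul_eq_of_eq_ggtSeries hδ0 hδ1 a b t hlen
  exact ⟨htotal, by rw [htotal, mul_comm _ N, mul_div_mul_left _ _ hN.ne']⟩
end

section
/- Fix integers K ≥ 1 and 1 ≤ i ≤ K, a real δ ∈ [0,1) and a real N > 0. Define β_j = 1 − δ^{K−j+1} for i ≤ j ≤ K and α_{l→j} = δ^{K−j+1}(1−δ)^{j−l} for l < j, define the GGT subphase lengths recursively by t_i = N/β_i and t_j = (1/β_j) Σ_{l=i}^{j−1} C(j−1, l−1) t_l α_{l→j} for i < j ≤ K, and set U_j = Σ_{l=i}^{j} C(j−1, l−1) t_l. Then for every j with i < j ≤ K: β_j · U_j = Σ_{l=1}^{j−i} (−1)^{l+1} C(j−1, l) β_{j−l} U_{j−l}, where C(·,·) denotes the binomial coefficient. -/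
/-!
The recurrence for `t_j` turns `β_j U_j` into `∑_{i ≤ l < j} C(j-1,l-1) t_l (β_j + α_{l→j})`.
By the binomial theorem, `β_j + α_{l→j} = 1 - δ^e + δ^e (1-δ)^{j-l}` is the alternating sum
`∑_{m=1}^{j-l} (-1)^{m+1} C(j-l,m) β_{j-m}`. The trinomial identity
`C(j-1,l-1) C(j-l,m) = C(j-1,m) C(j-m-1,l-1)` and an exchange of the sums over the triangle
`l + m ≤ j` then regroup the terms into `C(j-1,m) β_{j-m} U_{j-m}`.
-/

open Finset

theorem Nat.choose_mul_choose_sub_comm (n a b : ℕ) :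
    n.choose a * (n - a).choose b = n.choose b * (n - b).choose a := by
  have ha := Nat.choose_mul (n := n) (k := a + b) (s := a) (by omega)
  have hb := Nat.choose_mul (n := n) (k := a + b) (s := b) (by omega)
  rw [Nat.add_sub_cancel_left] at ha
  rw [Nat.add_sub_cancel] at hb
  rw [← ha, ← hb, Nat.choose_symm_add]

theorem sum_range_alternating_choose_mul_one_sub_pow {R : Type*} [CommRing R] (x : R) (e : ℕ)
    {n : ℕ} (hn : n ≠ 0) :
    ∑ m ∈ range (n + 1), (-1) ^ m * (n.choose m : R) * (1 - x ^ (e + m))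
      = -(x ^ e * (1 - x) ^ n) :=
  calc _ = ∑ m ∈ range (n + 1), (-1) ^ m * 1 ^ (n - m) * (n.choose m : R)
          - x ^ e * ∑ m ∈ range (n + 1), (-x) ^ m * 1 ^ (n - m) * (n.choose m : R) := by
        rw [mul_sum, ← sum_sub_distrib]
        refine sum_congr rfl fun m _ => ?_
        rw [neg_pow x]
        ring
    _ = (-1 + 1) ^ n - x ^ e * (-x + 1) ^ n := by rw [add_pow, add_pow]
    _ = _ := by rw [neg_add_cancel, zero_pow hn]; ring

theorem sum_Icc_alternating_choose_mul_one_sub_pow {R : Type*} [CommRing R] (x : R) (e : ℕ)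
    {n : ℕ} (hn : n ≠ 0) :
    ∑ m ∈ Icc 1 n, (-1) ^ (m + 1) * (n.choose m : R) * (1 - x ^ (e + m))
      = 1 - x ^ e + x ^ e * (1 - x) ^ n := by
  have h := sum_range_alternating_choose_mul_one_sub_pow x e hn
  rw [range_eq_Ico, sum_eq_sum_Ico_succ_bot (by omega), Ico_add_one_right_eq_Icc, zero_add] at h
  simp only [pow_succ, mul_neg_one, neg_mul, sum_neg_distrib]
  simp only [pow_zero, Nat.choose_zero_right, add_zero] at h
  linear_combination -h

theorem sum_Icc_sum_Icc_sub_comm {M : Type*} [AddCommMonoid M] (f : ℕ → ℕ → M) (i j : ℕ) :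
    ∑ l ∈ Icc i (j - 1), ∑ m ∈ Icc 1 (j - l), f l m
      = ∑ m ∈ Icc 1 (j - i), ∑ l ∈ Icc i (j - m), f l m :=
  sum_comm' fun l m => by simp only [mem_Icc]; omega

theorem ggt_beta_add_alpha {K i l j : ℕ} {δ : ℝ} {β : ℕ → ℝ} {α : ℕ → ℕ → ℝ}
    (hβ : ∀ j, i ≤ j → j ≤ K → β j = 1 - δ ^ (K - j + 1))
    (hα : ∀ l j, l < j → α l j = δ ^ (K - j + 1) * (1 - δ) ^ (j - l))
    (hil : i ≤ l) (hlj : l < j) (hjK : j ≤ K) :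
    β j + α l j = ∑ m ∈ Icc 1 (j - l), (-1) ^ (m + 1) * ((j - l).choose m : ℝ) * β (j - m) := by
  rw [hβ j (by omega) hjK, hα l j hlj,
    ← sum_Icc_alternating_choose_mul_one_sub_pow δ _ (by omega)]
  refine sum_congr rfl fun m hm => ?_
  rw [mem_Icc] at hm
  rw [hβ (j - m) (by omega) (by omega), show K - j + 1 + m = K - (j - m) + 1 by omega]

theorem ggt_alternating_recurrence_general (K i : ℕ) (hi : 1 ≤ i)
    (δ : ℝ) (hδ0 : 0 ≤ δ) (hδ1 : δ < 1)
    (β : ℕ → ℝ) (hβ : ∀ j, i ≤ j → j ≤ K → β j = 1 - δ ^ (K - j + 1))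
    (α : ℕ → ℕ → ℝ) (hα : ∀ l j, l < j → α l j = δ ^ (K - j + 1) * (1 - δ) ^ (j - l))
    (t : ℕ → ℝ)
    (htj : ∀ j, i < j → j ≤ K →
      t j = (1 / β j) * ∑ l ∈ Finset.Icc i (j - 1), (Nat.choose (j - 1) (l - 1) : ℝ) * t l * α l j)
    (U : ℕ → ℝ)
    (hU : ∀ j, i ≤ j → j ≤ K →
      U j = ∑ l ∈ Finset.Icc i j, (Nat.choose (j - 1) (l - 1) : ℝ) * t l) :
    ∀ j, i < j → j ≤ K →
      β j * U j
        = ∑ l ∈ Finset.Icc 1 (j - i), (-1 : ℝ) ^ (l + 1) * (Nat.choose (j - 1) l : ℝ)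
            * β (j - l) * U (j - l) := by
  intro j hij hjK
  have hβj : β j ≠ 0 := by
    rw [hβ j hij.le hjK]
    exact sub_ne_zero.2 (pow_lt_one₀ hδ0 hδ1 (by omega)).ne'
  have absorb : β j * U j
      = ∑ l ∈ Icc i (j - 1), ((j - 1).choose (l - 1) : ℝ) * t l * (β j + α l j) := by
    rw [hU j hij.le hjK, ← insert_Icc_sub_one_right_eq_Icc hij.le,
      sum_insert (by simp only [mem_Icc]; omega), Nat.choose_self, Nat.cast_one, one_mul,
      htj j hij hjK, mul_add, ← mul_assoc, mul_one_div_cancel hβj, one_mul, mul_sum,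
      ← sum_add_distrib]
    exact sum_congr rfl fun l _ => by ring
  set g : ℕ → ℕ → ℝ := fun l m => (-1) ^ (m + 1) * ((j - 1).choose m : ℝ) * β (j - m)
    * (((j - m - 1).choose (l - 1) : ℝ) * t l)
  have expand : ∀ l ∈ Icc i (j - 1),
      ((j - 1).choose (l - 1) : ℝ) * t l * (β j + α l j) = ∑ m ∈ Icc 1 (j - l), g l m := by
    intro l hl
    rw [mem_Icc] at hl
    rw [ggt_beta_add_alpha hβ hα hl.1 (by omega) hjK, mul_sum]
    refine sum_congr rfl fun m _ => ?_
    have hc := Nat.choose_mul_choose_sub_comm (j - 1) (l - 1) m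
    rw [show j - 1 - (l - 1) = j - l by omega, Nat.sub_right_comm] at hc
    replace hc := congrArg (Nat.cast : ℕ → ℝ) hc
    push_cast at hc
    linear_combination (t l * (-1) ^ (m + 1) * β (j - m)) * hc
  calc β j * U j = ∑ l ∈ Icc i (j - 1), ∑ m ∈ Icc 1 (j - l), g l m :=
        absorb.trans (sum_congr rfl expand)
    _ = ∑ m ∈ Icc 1 (j - i), ∑ l ∈ Icc i (j - m), g l m := sum_Icc_sum_Icc_sub_comm g i j
    _ = _ := sum_congr rfl fun m hm => by
      rw [mem_Icc] at hm
      rw [hU (j - m) (by omega) (by omega), mul_sum]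

/-- Alternating-sign recurrence for the grouped GGT subphase
lengths `U_j = Σ_{l=i}^j C(j-1,l-1) t_l`: for all `i < j ≤ K`,
`β_j U_j = Σ_{l=1}^{j-i} (-1)^{l+1} C(j-1,l) β_{j-l} U_{j-l}`. -/
theorem ggt_alternating_recurrence (K i : ℕ) (hi : 1 ≤ i) (hiK : i ≤ K)
    (δ N : ℝ) (hδ0 : 0 ≤ δ) (hδ1 : δ < 1) (hN : 0 < N)
    (β : ℕ → ℝ) (hβ : ∀ j, i ≤ j → j ≤ K → β j = 1 - δ ^ (K - j + 1))
    (α : ℕ → ℕ → ℝ) (hα : ∀ l j, l < j → α l j = δ ^ (K - j + 1) * (1 - δ) ^ (j - l))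
    (t : ℕ → ℝ) (hti : t i = N / β i)
    (htj : ∀ j, i < j → j ≤ K →
      t j = (1 / β j) * ∑ l ∈ Finset.Icc i (j - 1), (Nat.choose (j - 1) (l - 1) : ℝ) * t l * α l j)
    (U : ℕ → ℝ)
    (hU : ∀ j, i ≤ j → j ≤ K →
      U j = ∑ l ∈ Finset.Icc i j, (Nat.choose (j - 1) (l - 1) : ℝ) * t l) :
    ∀ j, i < j → j ≤ K →
      β j * U j
        = ∑ l ∈ Finset.Icc 1 (j - i), (-1 : ℝ) ^ (l + 1) * (Nat.choose (j - 1) l : ℝ)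
            * β (j - l) * U (j - l) :=
  ggt_alternating_recurrence_general K i hi δ hδ0 hδ1 β hβ α hα t htj U hU
end

section
/- Fix an integer K ≥ 2, a real δ ∈ [0,1) and a real N > 0. Define β_j = 1 − δ^{K−j+1} for 1 ≤ j ≤ K and α_{l→j} = δ^{K−j+1}(1−δ)^{j−l} for l < j. Let (s_j)_{j=1}^K be the phase-1 recursion: s_1 = N/β_1 and s_j = (1/β_j) Σ_{l=1}^{j−1} C(j−1, l−1) s_l α_{l→j} for 2 ≤ j ≤ K. For each m with 2 ≤ m ≤ K, let (t_j^m)_{j=m}^K be the phase-m recursion with initial value N_{1→m} := s_1 · α_{1→m}: t_m^m = N_{1→m}/β_m and t_j^m = (1/β_j) Σ_{l=m}^{j−1} C(j−1, l−1) t_l^m α_{l→j} for m < j ≤ K. Then for every j with 2 ≤ j ≤ K: s_j = Σ_{m=2}^{j} t_j^m. -/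
/-- Decomposition identity for the GGT subphase lengths: the
order-`j` subphase length `s_j` of the algorithm started at phase 1 equals the
sum over intermediate orders `m` of the order-`j` subphase lengths `t_j^m` of
the algorithms started at phase `m` with the `N_{1→m} = s_1 α_{1→m}` order-`m`
packets generated in phase 1. -/
theorem ggt_phase_decomposition (K : ℕ) (hK : 2 ≤ K)
    (δ N : ℝ) (hδ0 : 0 ≤ δ) (hδ1 : δ < 1) (hN : 0 < N)
    (β : ℕ → ℝ) (hβ : ∀ j, 1 ≤ j → j ≤ K → β j = 1 - δ ^ (K - j + 1))
    (α : ℕ → ℕ → ℝ) (hα : ∀ l j, l < j → α l j = δ ^ (K - j + 1) * (1 - δ) ^ (j - l))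
    (s : ℕ → ℝ) (hs1 : s 1 = N / β 1)
    (hsj : ∀ j, 2 ≤ j → j ≤ K →
      s j = (1 / β j) * ∑ l ∈ Finset.Icc 1 (j - 1), (Nat.choose (j - 1) (l - 1) : ℝ) * s l * α l j)
    (t : ℕ → ℕ → ℝ)
    (htm : ∀ m, 2 ≤ m → m ≤ K → t m m = s 1 * α 1 m / β m)
    (htj : ∀ m j, 2 ≤ m → m < j → j ≤ K →
      t m j = (1 / β j) *
        ∑ l ∈ Finset.Icc m (j - 1), (Nat.choose (j - 1) (l - 1) : ℝ) * t m l * α l j) :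
    ∀ j, 2 ≤ j → j ≤ K → s j = ∑ m ∈ Finset.Icc 2 j, t m j := by
  intro j
  induction j using Nat.strong_induction_on with
  | _ j IH =>
    intro hj2 hjK
    obtain ⟨p, rfl⟩ : ∃ p, j = p + 1 := ⟨j - 1, by omega⟩
    have hp1 : 1 ≤ p := by omega
    have key := hsj (p + 1) hj2 hjK
    simp only [Nat.add_sub_cancel] at key
    have hsplit : Finset.Icc 1 p = insert 1 (Finset.Icc 2 p) := by
      ext x; simp only [Finset.mem_Icc, Finset.mem_insert]; omega
    have h1notin : (1 : ℕ) ∉ Finset.Icc 2 p := by simp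
    rw [key, hsplit, Finset.sum_insert h1notin]
    have hrw : ∀ l ∈ Finset.Icc 2 p,
        (Nat.choose p (l - 1) : ℝ) * s l * α l (p + 1)
          = ∑ m ∈ Finset.Icc 2 l,
              (Nat.choose p (l - 1) : ℝ) * t m l * α l (p + 1) := by
      intro l hl
      simp only [Finset.mem_Icc] at hl
      rw [IH l (by omega) hl.1 (by omega), Finset.mul_sum, Finset.sum_mul]
    rw [Finset.sum_congr rfl hrw]
    have hswap :
        (∑ l ∈ Finset.Icc 2 p, ∑ m ∈ Finset.Icc 2 l,
            (Nat.choose p (l - 1) : ℝ) * t m l * α l (p + 1))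
          = ∑ m ∈ Finset.Icc 2 p, ∑ l ∈ Finset.Icc m p,
              (Nat.choose p (l - 1) : ℝ) * t m l * α l (p + 1) := by
      apply Finset.sum_comm'
      intro l m
      simp only [Finset.mem_Icc]
      omega
    rw [hswap]
    rw [Finset.sum_Icc_succ_top (by omega : 2 ≤ p + 1)]
    rw [htm (p + 1) hj2 hjK]
    have hrw2 : ∀ m ∈ Finset.Icc 2 p,
        t m (p + 1) = (1 / β (p + 1)) * ∑ l ∈ Finset.Icc m p,
            (Nat.choose p (l - 1) : ℝ) * t m l * α l (p + 1) := by
      intro m hm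
      simp only [Finset.mem_Icc] at hm
      have := htj m (p + 1) hm.1 (by omega) hjK
      exact this
    rw [Finset.sum_congr rfl hrw2]
    rw [mul_add, Finset.mul_sum]
    norm_num
    ring
end
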